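/- arXiv:1903.00215 — 3 statements merged into one kernel-verified Lean document; each statement's English description precedes it below -/
import Mathlib

section
/- For every x in [0,1], every n ∈ ℕ₀ and with the iterated integrals p_n, q_n defined with respect to a non-atomic Borel probability measure μ on [0,1], one has p_{2n+1}(x) ≤ (q_2(x))^n / n!, p_{2n}(x) ≤ (p_2(x))^n / n!, q_{2n+1}(x) ≤ (p_2(x))^n / n!, and q_{2n}(x) ≤ (q_2(x))^n / n!. -/
open MeasureTheory Real Filter

/-- Iterated integrals `p_n` w.r.t. a measure `ν`: `p_0 = 1`,
`p_n(x) = ∫_0^x p_{n-1} dν` if `n` odd, `p_n(x) = ∫_0^x p_{n-1} dt` if `n` even. -/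
noncomputable def pIter (ν : Measure ℝ) : ℕ → ℝ → ℝ
  | 0 => fun _ => 1
  | (n+1) => fun x =>
      if Odd (n+1) then ∫ t in Set.Ioc (0:ℝ) x, pIter ν n t ∂ν
      else ∫ t in Set.Ioc (0:ℝ) x, pIter ν n t

/-- Iterated integrals `q_n` w.r.t. a measure `ν`: `q_0 = 1`,
`q_n(x) = ∫_0^x q_{n-1} dt` if `n` odd, `q_n(x) = ∫_0^x q_{n-1} dν` if `n` even. -/
noncomputable def qIter (ν : Measure ℝ) : ℕ → ℝ → ℝ
  | 0 => fun _ => 1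
  | (n+1) => fun x =>
      if Odd (n+1) then ∫ t in Set.Ioc (0:ℝ) x, qIter ν n t
      else ∫ t in Set.Ioc (0:ℝ) x, qIter ν n t ∂ν

noncomputable def spF (ν : Measure ℝ) (z x : ℝ) : ℝ :=
  ∑' n : ℕ, (-1)^n * z^(2*n+1) * pIter ν (2*n+1) x

noncomputable def sqF (ν : Measure ℝ) (z x : ℝ) : ℝ :=
  ∑' n : ℕ, (-1)^n * z^(2*n+1) * qIter ν (2*n+1) x

noncomputable def cpF (ν : Measure ℝ) (z x : ℝ) : ℝ :=
  ∑' n : ℕ, (-1)^n * z^(2*n) * pIter ν (2*n) x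

noncomputable def cqF (ν : Measure ℝ) (z x : ℝ) : ℝ :=
  ∑' n : ℕ, (-1)^n * z^(2*n) * qIter ν (2*n) x

noncomputable def sinpF (ν : Measure ℝ) (z : ℝ) : ℝ := spF ν z 1
noncomputable def sinqF (ν : Measure ℝ) (z : ℝ) : ℝ := sqF ν z 1
noncomputable def cospF (ν : Measure ℝ) (z : ℝ) : ℝ := cpF ν z 1
noncomputable def cosqF (ν : Measure ℝ) (z : ℝ) : ℝ := cqF ν z 1

/-- distribution function `F(x) = ν [0,x]` -/
noncomputable def distF (ν : Measure ℝ) (x : ℝ) : ℝ := (ν (Set.Icc 0 x)).toReal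

/-- supremum distance of two functions over `[0,1]` -/
noncomputable def supDist (f g : ℝ → ℝ) : ℝ := ⨆ x : Set.Icc (0:ℝ) 1, |f x.1 - g x.1|


section MyHelpers
open Set Topology

/-! ### Generic helper lemmas -/

lemma myMonoInt (m : Measure ℝ) [IsLocallyFiniteMeasure m] {f : ℝ → ℝ} {a b : ℝ}
    (hf : MonotoneOn f (Set.Icc a b)) : IntegrableOn f (Set.Ioc a b) m :=
  (hf.integrableOn_isCompact isCompact_Icc).mono_set Set.Ioc_subset_Icc_self

lemma myStepMono (m : Measure ℝ) [IsLocallyFiniteMeasure m] {f : ℝ → ℝ}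
    (hf : Monotone f) (h0 : ∀ t, 0 ≤ f t) :
    Monotone (fun x => ∫ t in Set.Ioc (0:ℝ) x, f t ∂m) := by
  intro x y hxy
  exact setIntegral_mono_set (myMonoInt m (hf.monotoneOn _))
    (ae_of_all _ h0) (HasSubset.Subset.eventuallyLE (Set.Ioc_subset_Ioc_right hxy))

lemma myStepNonneg (m : Measure ℝ) {f : ℝ → ℝ} (h0 : ∀ t, 0 ≤ f t) (x : ℝ) :
    0 ≤ ∫ t in Set.Ioc (0:ℝ) x, f t ∂m :=
  setIntegral_nonneg measurableSet_Ioc (fun t _ => h0 t)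

lemma myDiff (m : Measure ℝ) [IsLocallyFiniteMeasure m] {f : ℝ → ℝ}
    (hf : Monotone f) {a b : ℝ} (ha : 0 ≤ a) (hab : a ≤ b) :
    (∫ t in Set.Ioc (0:ℝ) b, f t ∂m) - (∫ t in Set.Ioc (0:ℝ) a, f t ∂m)
      = ∫ t in Set.Ioc a b, f t ∂m := by
  rw [← Set.Ioc_union_Ioc_eq_Ioc ha hab,
    setIntegral_union (Set.Ioc_disjoint_Ioc_of_le le_rfl) measurableSet_Ioc
      (myMonoInt m (hf.monotoneOn _)) (myMonoInt m (hf.monotoneOn _))]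
  ring

lemma myInterSingleton (a : ℝ) :
    (⋂ n : ℕ, Set.Ioc (a - 1/((n:ℝ)+1)) (a + 1/((n:ℝ)+1))) = {a} := by
  ext t
  simp only [Set.mem_iInter, Set.mem_Ioc, Set.mem_singleton_iff]
  constructor
  · intro h
    have h1 : a ≤ t := by
      by_contra hlt
      push_neg at hlt
      obtain ⟨n, hn⟩ := exists_nat_one_div_lt (sub_pos.2 hlt)
      have := (h n).1
      linarith
    have h2 : t ≤ a := by
      by_contra hlt
      push_neg at hlt
      obtain ⟨n, hn⟩ := exists_nat_one_div_lt (sub_pos.2 hlt)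
      have := (h n).2
      linarith
    linarith
  · rintro rfl
    intro n
    have : (0:ℝ) < 1/((n:ℝ)+1) := by positivity
    constructor <;> linarith

lemma myMeasTendsto (m : Measure ℝ) [IsLocallyFiniteMeasure m] [NullSingletonClass m] (a : ℝ) :
    Tendsto (fun n : ℕ => (m (Set.Ioc (a - 1/((n:ℝ)+1)) (a + 1/((n:ℝ)+1)))).toReal)
      atTop (𝓝 0) := by
  have hanti : Antitone (fun n : ℕ => Set.Ioc (a - 1/((n:ℝ)+1)) (a + 1/((n:ℝ)+1))) := by
    intro i j hij
    have h1 : 1/((j:ℝ)+1) ≤ 1/((i:ℝ)+1) := by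
      apply one_div_le_one_div_of_le (by positivity)
      exact_mod_cast by omega
    exact Set.Ioc_subset_Ioc (by linarith) (by linarith)
  have h := tendsto_measure_iInter_atTop (μ := m)
    (fun n => (measurableSet_Ioc).nullMeasurableSet) hanti
    ⟨0, (measure_Ioc_lt_top (μ := m)).ne⟩
  rw [myInterSingleton a, measure_singleton] at h
  exact (ENNReal.tendsto_toReal (by simp)).comp h

lemma myCont (m : Measure ℝ) [IsLocallyFiniteMeasure m] [NullSingletonClass m] {g : ℝ → ℝ}
    (hg : Monotone g) (h0 : ∀ t, 0 ≤ g t) :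
    Continuous (fun x => ∫ t in Set.Ioc (0:ℝ) x, g t ∂m) := by
  set f := fun x => ∫ t in Set.Ioc (0:ℝ) x, g t ∂m with hf
  have hfmono : Monotone f := myStepMono m hg h0
  have claim1 : ∀ u v : ℝ, u ≤ v → f v - f u ≤ ∫ t in Set.Ioc u v, g t ∂m := by
    intro u v huv
    rcases le_or_gt 0 u with hu | hu
    · exact le_of_eq (myDiff m hg hu huv)
    · have hfu : f u = 0 := by
        simp only [hf, Set.Ioc_eq_empty (by linarith : ¬ (0:ℝ) < u), Measure.restrict_empty,
          integral_zero_measure]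
      rw [hfu, sub_zero]
      exact setIntegral_mono_set (myMonoInt m (hg.monotoneOn _)) (ae_of_all _ h0)
        (HasSubset.Subset.eventuallyLE (Set.Ioc_subset_Ioc hu.le le_rfl))
  rw [continuous_iff_continuousAt]
  intro a
  rw [Metric.continuousAt_iff]
  intro ε hε
  set C := g (a+1) + 1 with hC
  have hCpos : 0 < C := by have := h0 (a+1); simp only [hC]; linarith
  obtain ⟨n, hn⟩ : ∃ n : ℕ, (m (Set.Ioc (a - 1/((n:ℝ)+1)) (a + 1/((n:ℝ)+1)))).toReal < ε / C :=
    ((myMeasTendsto m a).eventually (gt_mem_nhds (by positivity))).exists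
  set η := 1/((n:ℝ)+1) with hη
  have hηpos : 0 < η := by positivity
  have hη1 : η ≤ 1 := by
    rw [hη]
    rw [div_le_one (by positivity)]
    simp
  refine ⟨η, hηpos, ?_⟩
  intro b hb
  rw [Real.dist_eq] at hb ⊢
  set s := Set.Ioc (a - η) (a + η) with hs
  have claim2 : ∀ u v : ℝ, a - η ≤ u → u ≤ v → v ≤ a + η →
      (∫ t in Set.Ioc u v, g t ∂m) ≤ C * (m s).toReal := by
    intro u v h1 h2 h3
    have hb1 : ∀ t ∈ Set.Ioc u v, g t ≤ C := by
      intro t ht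
      have : g t ≤ g (a+1) := hg (le_trans ht.2 (by linarith))
      linarith
    calc (∫ t in Set.Ioc u v, g t ∂m) ≤ ∫ _ in Set.Ioc u v, C ∂m := by
          apply setIntegral_mono_on (myMonoInt m (hg.monotoneOn _))
            (integrableOn_const measure_Ioc_lt_top.ne) measurableSet_Ioc hb1
      _ = (m (Set.Ioc u v)).toReal * C := by rw [setIntegral_const, smul_eq_mul, measureReal_def]
      _ ≤ (m s).toReal * C := by
          apply mul_le_mul_of_nonneg_right _ hCpos.le
          apply ENNReal.toReal_mono measure_Ioc_lt_top.ne
          exact measure_mono (Set.Ioc_subset_Ioc h1 h3)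
      _ = C * (m s).toReal := mul_comm _ _
  have hfin : C * (m s).toReal < ε := by
    calc C * (m s).toReal < C * (ε / C) := by
          apply mul_lt_mul_of_pos_left _ hCpos
          exact hn
      _ = ε := by field_simp
  rcases le_total a b with hab | hab
  · rw [abs_of_nonneg (sub_nonneg.2 (hfmono hab))]
    have := claim1 a b hab
    have h2 := claim2 a b (by linarith) hab (by rw [abs_of_nonneg (by linarith)] at hb; linarith)
    linarith
  · rw [abs_sub_comm, abs_of_nonneg (sub_nonneg.2 (hfmono hab))]
    have := claim1 b a hab
    have h2 := claim2 b a (by rw [abs_of_nonpos (by linarith)] at hb; linarith) hab (by linarith)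
    linarith

lemma myBinom : ∀ (a : ℝ), 0 ≤ a → ∀ m : ℕ, a^(m+1) + ((m:ℝ)+1)*a^m ≤ (a+1)^(m+1) := by
  intro a ha m
  induction m with
  | zero => simp
  | succ m ih =>
    have h2 : (a+1)*(a^(m+1) + ((m:ℝ)+1)*a^m) ≤ (a+1)*(a+1)^(m+1) :=
      mul_le_mul_of_nonneg_left ih (by linarith)
    have e1 : a^(m+2) = a * a^(m+1) := by ring
    have e2 : a^(m+1) = a * a^m := by ring
    have hX : 0 ≤ a^m := pow_nonneg ha m
    have hY : (0:ℝ) ≤ (m:ℝ)+1 := by positivity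
    have h3 : a^(m+2) + ((m:ℝ)+2)*a^(m+1) ≤ (a+1)*(a^(m+1) + ((m:ℝ)+1)*a^m) := by
      nlinarith [mul_nonneg hY hX]
    have h4 : (a+1)^(m+1+1) = (a+1)*(a+1)^(m+1) := by ring
    push_cast
    rw [h4]
    push_cast at h3
    linarith

lemma mySumPow (n : ℕ) : ∀ k : ℕ, ∑ i ∈ Finset.range k, ((i:ℝ)+1)^n ≤ ((k:ℝ)+1)^(n+1)/((n:ℝ)+1) := by
  intro k
  induction k with
  | zero => simp; positivity
  | succ k ih =>
    rw [Finset.sum_range_succ]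
    push_cast
    have hb := myBinom ((k:ℝ)+1) (by positivity) n
    have hn : (0:ℝ) < (n:ℝ)+1 := by positivity
    calc ∑ i ∈ Finset.range k, ((i:ℝ)+1)^n + ((k:ℝ)+1)^n
        ≤ ((k:ℝ)+1)^(n+1)/((n:ℝ)+1) + (((n:ℝ)+1)*((k:ℝ)+1)^n)/((n:ℝ)+1) := by
          have e1 : (((n:ℝ)+1)*((k:ℝ)+1)^n)/((n:ℝ)+1) = ((k:ℝ)+1)^n := by field_simp
          rw [e1]
          exact add_le_add ih le_rfl
      _ = (((k:ℝ)+1)^(n+1) + ((n:ℝ)+1)*((k:ℝ)+1)^n)/((n:ℝ)+1) := by ring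
      _ ≤ (((k:ℝ)+1)+1)^(n+1)/((n:ℝ)+1) := by
          apply div_le_div_of_nonneg_right hb hn.le

section Key

variable (m : Measure ℝ) [IsLocallyFiniteMeasure m] (g G : ℝ → ℝ) (x : ℝ) (n : ℕ)
  (hgmono : Monotone g) (hg0 : ∀ t, 0 ≤ g t)
  (hGmono : Monotone G) (hG0 : G 0 = 0)

include hgmono hg0 hGmono hG0

lemma myProdMonoOn {a b : ℝ} (ha : 0 ≤ a) :
    MonotoneOn (fun t => (G t)^n * g t) (Set.Icc a b) := by
  intro s hs t ht hst
  have hGs : 0 ≤ G s := hG0 ▸ hGmono (ha.trans hs.1)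
  have hGt : 0 ≤ G t := hG0 ▸ hGmono (ha.trans ht.1)
  exact mul_le_mul (pow_le_pow_left₀ hGs (hGmono hst) n) (hgmono hst) (hg0 s)
    (pow_nonneg hGt n)

lemma myPiece {a b : ℝ} (ha : 0 ≤ a) (hab : a ≤ b) (hx : b ≤ x)
    (habI : ∀ a b : ℝ, 0 ≤ a → a ≤ b → b ≤ x → (∫ t in Set.Ioc a b, g t ∂m) ≤ G b - G a) :
    (∫ t in Set.Ioc a b, (G t)^n * g t ∂m) ≤ (G b)^n * (G b - G a) := by
  have hGb : 0 ≤ G b := hG0 ▸ hGmono (ha.trans hab)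
  calc (∫ t in Set.Ioc a b, (G t)^n * g t ∂m)
      ≤ ∫ t in Set.Ioc a b, (G b)^n * g t ∂m := by
        apply setIntegral_mono_on (myMonoInt m (myProdMonoOn g G n hgmono hg0 hGmono hG0 ha))
          ((myMonoInt m (hgmono.monotoneOn _)).const_mul _) measurableSet_Ioc
        intro t ht
        have hGt : 0 ≤ G t := hG0 ▸ hGmono (ha.trans ht.1.le)
        exact mul_le_mul_of_nonneg_right (pow_le_pow_left₀ hGt (hGmono ht.2) n) (hg0 t)
    _ = (G b)^n * ∫ t in Set.Ioc a b, g t ∂m := by rw [integral_const_mul]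
    _ ≤ (G b)^n * (G b - G a) :=
        mul_le_mul_of_nonneg_left (habI a b ha hab hx) (pow_nonneg hGb n)

lemma myClaim (hx : 0 ≤ x)
    (hcont : ContinuousOn G (Set.Icc 0 x))
    (habI : ∀ a b : ℝ, 0 ≤ a → a ≤ b → b ≤ x → (∫ t in Set.Ioc a b, g t ∂m) ≤ G b - G a) :
    ∀ k : ℕ, ∀ a : ℝ, 0 ≤ a → a ≤ x →
    (∫ t in Set.Ioc a x, (G t)^n * g t ∂m) ≤
      ∑ i ∈ Finset.range (k+1), (G a + ((i:ℝ)+1)*((G x - G a)/((k:ℝ)+1)))^n * ((G x - G a)/((k:ℝ)+1)) := by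
  intro k
  induction k with
  | zero =>
    intro a ha hax
    have h := myPiece m g G x n hgmono hg0 hGmono hG0 ha hax le_rfl habI
    refine le_trans h (le_of_eq ?_)
    rw [show (0:ℕ)+1 = 1 from rfl, Finset.sum_range_one]
    push_cast
    ring
  | succ k ih =>
    intro a ha hax
    set δ := (G x - G a)/((k:ℝ)+2) with hδdef
    have hGax : G a ≤ G x := hGmono hax
    have hk1 : ((k:ℝ)+1) ≠ 0 := by positivity
    have hk2 : ((k:ℝ)+2) ≠ 0 := by positivity
    have hδ : 0 ≤ δ := div_nonneg (by linarith) (by positivity)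
    have hsum : G x - G a = ((k:ℝ)+2) * δ := by rw [hδdef]; field_simp
    have hkδ : 0 ≤ ((k:ℝ)+1) * δ := mul_nonneg (by positivity) hδ
    have hexp : ((k:ℝ)+2)*δ = ((k:ℝ)+1)*δ + δ := by ring
    have hGaδx : G a + δ ≤ G x := by linarith
    have hmem : G a + δ ∈ Set.Icc (G 0) (G x) :=
      ⟨by have := hGmono ha; linarith, hGaδx⟩
    obtain ⟨s₀, hs₀m, hGs₀⟩ := intermediate_value_Icc hx hcont hmem
    set s := max s₀ a with hsdef
    have hsmem : s ∈ Set.Icc (0:ℝ) x := ⟨le_trans ha (le_max_right _ _), max_le hs₀m.2 hax⟩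
    have has : a ≤ s := le_max_right _ _
    have hGs : G s = G a + δ := by
      rcases le_or_gt a s₀ with h | h
      · rw [hsdef, max_eq_left h, hGs₀]
      · have h1 : G s₀ ≤ G a := hGmono h.le
        rw [hGs₀] at h1
        have h2 : s = a := max_eq_right h.le
        rw [h2]
        linarith
    have hsplit : (∫ t in Set.Ioc a x, (G t)^n * g t ∂m)
        = (∫ t in Set.Ioc a s, (G t)^n * g t ∂m) + (∫ t in Set.Ioc s x, (G t)^n * g t ∂m) := by
      rw [← Set.Ioc_union_Ioc_eq_Ioc has hsmem.2,
        setIntegral_union (Set.Ioc_disjoint_Ioc_of_le le_rfl) measurableSet_Ioc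
          (myMonoInt m ((myProdMonoOn g G n hgmono hg0 hGmono hG0 ha)))
          (myMonoInt m ((myProdMonoOn g G n hgmono hg0 hGmono hG0 hsmem.1)))]
    have h1 : (∫ t in Set.Ioc a s, (G t)^n * g t ∂m) ≤ (G a + δ)^n * δ := by
      have h := myPiece m g G x n hgmono hg0 hGmono hG0 ha has hsmem.2 habI
      rw [hGs] at h
      refine h.trans (le_of_eq ?_)
      ring
    have hδ' : (G x - G s)/((k:ℝ)+1) = δ := by
      rw [hGs, hδdef]
      field_simp
      ring
    have h2 := ih s hsmem.1 hsmem.2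
    rw [hδ'] at h2
    have h2' : (∫ t in Set.Ioc s x, (G t)^n * g t ∂m)
        ≤ ∑ i ∈ Finset.range (k+1), (G a + ((i:ℝ)+2)*δ)^n * δ := by
      refine h2.trans (le_of_eq (Finset.sum_congr rfl ?_))
      intro i _
      rw [hGs]
      ring
    have hfin : (G a + δ)^n * δ + (∑ i ∈ Finset.range (k+1), (G a + ((i:ℝ)+2)*δ)^n * δ)
        = ∑ i ∈ Finset.range (k+2), (G a + ((i:ℝ)+1)*δ)^n * δ := by
      rw [Finset.sum_range_succ' (fun i => (G a + ((i:ℝ)+1)*δ)^n * δ) (k+1)]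
      have es : (∑ i ∈ Finset.range (k+1), (G a + ((i:ℝ)+2)*δ)^n * δ)
          = ∑ i ∈ Finset.range (k+1), (G a + ((↑(i+1):ℝ)+1)*δ)^n * δ := by
        refine Finset.sum_congr rfl ?_
        intro i _
        push_cast
        ring
      rw [es]
      push_cast
      ring
    have hc : (G x - G a)/((k:ℝ)+1+1) = δ := by rw [hδdef]; ring
    push_cast
    rw [hc, ← hfin, hsplit]
    linarith

lemma myKey (hx : 0 ≤ x)
    (hcont : ContinuousOn G (Set.Icc 0 x))
    (habI : ∀ a b : ℝ, 0 ≤ a → a ≤ b → b ≤ x → (∫ t in Set.Ioc a b, g t ∂m) ≤ G b - G a) :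
    (∫ t in Set.Ioc (0:ℝ) x, (G t)^n * g t ∂m) ≤ (G x)^(n+1)/((n:ℝ)+1) := by
  have hGx : 0 ≤ G x := hG0 ▸ hGmono hx
  have hbound : ∀ k : ℕ, (∫ t in Set.Ioc (0:ℝ) x, (G t)^n * g t ∂m)
      ≤ (G x)^(n+1)/((n:ℝ)+1) * (((k:ℝ)+2)/((k:ℝ)+1))^(n+1) := by
    intro k
    have hk1 : ((k:ℝ)+1) ≠ 0 := by positivity
    have hclaim := myClaim m g G x n hgmono hg0 hGmono hG0 hx hcont habI k 0 le_rfl hx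
    rw [hG0] at hclaim
    simp only [zero_add, sub_zero] at hclaim
    set δ := G x/((k:ℝ)+1) with hδdef
    have hδ : 0 ≤ δ := by positivity
    have hsum : (∑ i ∈ Finset.range (k+1), (((i:ℝ)+1)*δ)^n * δ)
        = δ^(n+1) * ∑ i ∈ Finset.range (k+1), ((i:ℝ)+1)^n := by
      rw [Finset.mul_sum]
      refine Finset.sum_congr rfl ?_
      intro i _
      rw [mul_pow, pow_succ]
      ring
    have hsp := mySumPow n (k+1)
    calc (∫ t in Set.Ioc (0:ℝ) x, (G t)^n * g t ∂m)
        ≤ ∑ i ∈ Finset.range (k+1), (((i:ℝ)+1)*δ)^n * δ := hclaim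
      _ = δ^(n+1) * ∑ i ∈ Finset.range (k+1), ((i:ℝ)+1)^n := hsum
      _ ≤ δ^(n+1) * (((↑(k+1):ℝ))+1)^(n+1)/((n:ℝ)+1) := by
          rw [mul_div_assoc]
          exact mul_le_mul_of_nonneg_left hsp (by positivity)
      _ = (G x)^(n+1)/((n:ℝ)+1) * (((k:ℝ)+2)/((k:ℝ)+1))^(n+1) := by
          rw [hδdef, div_pow, div_pow]
          push_cast
          ring
  have h1 : Tendsto (fun k : ℕ => ((k:ℝ)+2)/((k:ℝ)+1)) atTop (𝓝 1) := by
    have h0 : Tendsto (fun k : ℕ => 1 + 1/((k:ℝ)+1)) atTop (𝓝 1) := by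
      have h := (tendsto_const_nhds : Tendsto (fun _ : ℕ => (1:ℝ)) atTop (𝓝 1)).add
        tendsto_one_div_add_atTop_nhds_zero_nat
      simpa using h
    refine h0.congr ?_
    intro k
    have hk1 : ((k:ℝ)+1) ≠ 0 := by positivity
    field_simp
    ring
  have htend : Tendsto (fun k : ℕ => (G x)^(n+1)/((n:ℝ)+1) * (((k:ℝ)+2)/((k:ℝ)+1))^(n+1))
      atTop (𝓝 ((G x)^(n+1)/((n:ℝ)+1))) := by
    have h := (h1.pow (n+1)).const_mul ((G x)^(n+1)/((n:ℝ)+1))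
    simpa using h
  exact ge_of_tendsto' htend hbound

lemma myOuter (w : ℝ → ℝ) (hx : 0 ≤ x) (c : ℝ) (hc : 0 ≤ c)
    (hwmono : Monotone w)
    (hcont : ContinuousOn G (Set.Icc 0 x))
    (habI : ∀ a b : ℝ, 0 ≤ a → a ≤ b → b ≤ x → (∫ t in Set.Ioc a b, g t ∂m) ≤ G b - G a)
    (hbnd : ∀ t ∈ Set.Ioc (0:ℝ) x, w t ≤ c * ((G t)^n * g t)) :
    (∫ t in Set.Ioc (0:ℝ) x, w t ∂m) ≤ c * ((G x)^(n+1)/((n:ℝ)+1)) := by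
  calc (∫ t in Set.Ioc (0:ℝ) x, w t ∂m)
      ≤ ∫ t in Set.Ioc (0:ℝ) x, c * ((G t)^n * g t) ∂m :=
        setIntegral_mono_on (myMonoInt m (hwmono.monotoneOn _))
          ((myMonoInt m (myProdMonoOn g G n hgmono hg0 hGmono hG0 le_rfl)).const_mul c)
          measurableSet_Ioc hbnd
    _ = c * ∫ t in Set.Ioc (0:ℝ) x, (G t)^n * g t ∂m := integral_const_mul c _
    _ ≤ c * ((G x)^(n+1)/((n:ℝ)+1)) :=
        mul_le_mul_of_nonneg_left (myKey m g G x n hgmono hg0 hGmono hG0 hx hcont habI) hc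

end Key

lemma myInner (m : Measure ℝ) [IsLocallyFiniteMeasure m] (u : ℝ → ℝ) (t : ℝ) (C : ℝ)
    (humono : Monotone u) (hbnd : ∀ s ∈ Set.Ioc (0:ℝ) t, u s ≤ C) :
    (∫ s in Set.Ioc (0:ℝ) t, u s ∂m) ≤ C * (m (Set.Ioc 0 t)).toReal := by
  calc (∫ s in Set.Ioc (0:ℝ) t, u s ∂m) ≤ ∫ _ in Set.Ioc (0:ℝ) t, C ∂m :=
        setIntegral_mono_on (myMonoInt m (humono.monotoneOn _))
          (integrableOn_const measure_Ioc_lt_top.ne) measurableSet_Ioc hbnd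
    _ = (m (Set.Ioc (0:ℝ) t)).toReal * C := by rw [setIntegral_const, smul_eq_mul, measureReal_def]
    _ = C * (m (Set.Ioc (0:ℝ) t)).toReal := mul_comm _ _

/-! ### Facts about `pIter` and `qIter` -/

section Iter
variable (ν : Measure ℝ) [IsProbabilityMeasure ν]

lemma pIter_succ_eq (n : ℕ) (x : ℝ) : pIter ν (n+1) x =
    if Odd (n+1) then ∫ t in Set.Ioc (0:ℝ) x, pIter ν n t ∂ν
    else ∫ t in Set.Ioc (0:ℝ) x, pIter ν n t := rfl

lemma qIter_succ_eq (n : ℕ) (x : ℝ) : qIter ν (n+1) x =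
    if Odd (n+1) then ∫ t in Set.Ioc (0:ℝ) x, qIter ν n t
    else ∫ t in Set.Ioc (0:ℝ) x, qIter ν n t ∂ν := rfl

lemma pIter_mono_nonneg : ∀ n : ℕ, Monotone (pIter ν n) ∧ ∀ t, 0 ≤ pIter ν n t := by
  intro n
  induction n with
  | zero => exact ⟨monotone_const, fun t => zero_le_one⟩
  | succ n ih =>
    have hrec : pIter ν (n+1) = fun x =>
        if Odd (n+1) then ∫ t in Set.Ioc (0:ℝ) x, pIter ν n t ∂ν
        else ∫ t in Set.Ioc (0:ℝ) x, pIter ν n t := rfl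
    rw [hrec]
    by_cases h : Odd (n+1)
    · simp only [if_pos h]
      exact ⟨myStepMono ν ih.1 ih.2, fun t => myStepNonneg ν ih.2 t⟩
    · simp only [if_neg h]
      exact ⟨myStepMono volume ih.1 ih.2, fun t => myStepNonneg volume ih.2 t⟩

lemma qIter_mono_nonneg : ∀ n : ℕ, Monotone (qIter ν n) ∧ ∀ t, 0 ≤ qIter ν n t := by
  intro n
  induction n with
  | zero => exact ⟨monotone_const, fun t => zero_le_one⟩
  | succ n ih =>
    have hrec : qIter ν (n+1) = fun x =>
        if Odd (n+1) then ∫ t in Set.Ioc (0:ℝ) x, qIter ν n t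
        else ∫ t in Set.Ioc (0:ℝ) x, qIter ν n t ∂ν := rfl
    rw [hrec]
    by_cases h : Odd (n+1)
    · simp only [if_pos h]
      exact ⟨myStepMono volume ih.1 ih.2, fun t => myStepNonneg volume ih.2 t⟩
    · simp only [if_neg h]
      exact ⟨myStepMono ν ih.1 ih.2, fun t => myStepNonneg ν ih.2 t⟩

lemma pIter_odd_eq (n : ℕ) (x : ℝ) :
    pIter ν (2*n+1) x = ∫ t in Set.Ioc (0:ℝ) x, pIter ν (2*n) t ∂ν := by
  rw [pIter_succ_eq, if_pos ⟨n, by ring⟩]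

lemma pIter_even_eq (n : ℕ) (x : ℝ) :
    pIter ν (2*n+2) x = ∫ t in Set.Ioc (0:ℝ) x, pIter ν (2*n+1) t := by
  rw [pIter_succ_eq, if_neg (by simp [Nat.odd_iff]; omega)]

lemma qIter_odd_eq (n : ℕ) (x : ℝ) :
    qIter ν (2*n+1) x = ∫ t in Set.Ioc (0:ℝ) x, qIter ν (2*n) t := by
  rw [qIter_succ_eq, if_pos ⟨n, by ring⟩]

lemma qIter_even_eq (n : ℕ) (x : ℝ) :
    qIter ν (2*n+2) x = ∫ t in Set.Ioc (0:ℝ) x, qIter ν (2*n+1) t ∂ν := by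
  rw [qIter_succ_eq, if_neg (by simp [Nat.odd_iff]; omega)]

lemma pIter_one_eq (x : ℝ) : pIter ν 1 x = (ν (Set.Ioc 0 x)).toReal := by
  have h := pIter_odd_eq ν 0 x
  norm_num at h
  rw [h]
  have : ∀ t ∈ Set.Ioc (0:ℝ) x, pIter ν 0 t = 1 := fun t _ => rfl
  rw [setIntegral_congr_fun measurableSet_Ioc this, setIntegral_const, smul_eq_mul, mul_one,
    measureReal_def]

lemma qIter_one_eq (x : ℝ) (hx : 0 ≤ x) : qIter ν 1 x = x := by
  have h := qIter_odd_eq ν 0 x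
  norm_num at h
  rw [h]
  have : ∀ t ∈ Set.Ioc (0:ℝ) x, qIter ν 0 t = 1 := fun t _ => rfl
  rw [setIntegral_congr_fun measurableSet_Ioc this, setIntegral_const, smul_eq_mul, mul_one, measureReal_def,
    Real.volume_Ioc, sub_zero, ENNReal.toReal_ofReal hx]

lemma pIter_le_one : ∀ n : ℕ, ∀ x ∈ Set.Icc (0:ℝ) 1, pIter ν n x ≤ 1 := by
  have hstep : ∀ (m : Measure ℝ), IsLocallyFiniteMeasure m → ∀ (f : ℝ → ℝ), Monotone f →
      ∀ x : ℝ, x ∈ Set.Icc (0:ℝ) 1 → (m (Set.Ioc 0 x)).toReal ≤ 1 →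
      (∀ t ∈ Set.Ioc (0:ℝ) x, f t ≤ 1) → (∫ t in Set.Ioc (0:ℝ) x, f t ∂m) ≤ 1 := by
    intro m hm f hf x hx hmx hf1
    calc (∫ t in Set.Ioc (0:ℝ) x, f t ∂m) ≤ ∫ _ in Set.Ioc (0:ℝ) x, (1:ℝ) ∂m :=
          setIntegral_mono_on (myMonoInt m (hf.monotoneOn _))
            (integrableOn_const measure_Ioc_lt_top.ne) measurableSet_Ioc hf1
      _ = (m (Set.Ioc (0:ℝ) x)).toReal := by rw [setIntegral_const, smul_eq_mul, mul_one, measureReal_def]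
      _ ≤ 1 := hmx
  have hν : ∀ x : ℝ, x ∈ Set.Icc (0:ℝ) 1 → (ν (Set.Ioc 0 x)).toReal ≤ 1 := by
    intro x _
    calc (ν (Set.Ioc 0 x)).toReal ≤ (ν Set.univ).toReal :=
          ENNReal.toReal_mono (measure_ne_top _ _) (measure_mono (Set.subset_univ _))
      _ = 1 := by simp
  have hvol : ∀ x : ℝ, x ∈ Set.Icc (0:ℝ) 1 → (volume (Set.Ioc (0:ℝ) x)).toReal ≤ 1 := by
    intro x hx
    rw [Real.volume_Ioc, sub_zero, ENNReal.toReal_ofReal hx.1]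
    exact hx.2
  intro n
  induction n with
  | zero => intro x _; exact le_rfl
  | succ n ih =>
    intro x hx
    have hsub : ∀ t ∈ Set.Ioc (0:ℝ) x, pIter ν n t ≤ 1 := fun t ht =>
      ih t ⟨ht.1.le, ht.2.trans hx.2⟩
    rw [pIter_succ_eq]
    by_cases h : Odd (n+1)
    · rw [if_pos h]
      exact hstep ν inferInstance _ (pIter_mono_nonneg ν n).1 x hx (hν x hx) hsub
    · rw [if_neg h]
      exact hstep volume inferInstance _ (pIter_mono_nonneg ν n).1 x hx (hvol x hx) hsub

lemma qIter_le_one : ∀ n : ℕ, ∀ x ∈ Set.Icc (0:ℝ) 1, qIter ν n x ≤ 1 := by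
  have hstep : ∀ (m : Measure ℝ), IsLocallyFiniteMeasure m → ∀ (f : ℝ → ℝ), Monotone f →
      ∀ x : ℝ, x ∈ Set.Icc (0:ℝ) 1 → (m (Set.Ioc 0 x)).toReal ≤ 1 →
      (∀ t ∈ Set.Ioc (0:ℝ) x, f t ≤ 1) → (∫ t in Set.Ioc (0:ℝ) x, f t ∂m) ≤ 1 := by
    intro m hm f hf x hx hmx hf1
    calc (∫ t in Set.Ioc (0:ℝ) x, f t ∂m) ≤ ∫ _ in Set.Ioc (0:ℝ) x, (1:ℝ) ∂m :=
          setIntegral_mono_on (myMonoInt m (hf.monotoneOn _))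
            (integrableOn_const measure_Ioc_lt_top.ne) measurableSet_Ioc hf1
      _ = (m (Set.Ioc (0:ℝ) x)).toReal := by rw [setIntegral_const, smul_eq_mul, mul_one, measureReal_def]
      _ ≤ 1 := hmx
  have hν : ∀ x : ℝ, x ∈ Set.Icc (0:ℝ) 1 → (ν (Set.Ioc 0 x)).toReal ≤ 1 := by
    intro x _
    calc (ν (Set.Ioc 0 x)).toReal ≤ (ν Set.univ).toReal :=
          ENNReal.toReal_mono (measure_ne_top _ _) (measure_mono (Set.subset_univ _))
      _ = 1 := by simp
  have hvol : ∀ x : ℝ, x ∈ Set.Icc (0:ℝ) 1 → (volume (Set.Ioc (0:ℝ) x)).toReal ≤ 1 := by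
    intro x hx
    rw [Real.volume_Ioc, sub_zero, ENNReal.toReal_ofReal hx.1]
    exact hx.2
  intro n
  induction n with
  | zero => intro x _; exact le_rfl
  | succ n ih =>
    intro x hx
    have hsub : ∀ t ∈ Set.Ioc (0:ℝ) x, qIter ν n t ≤ 1 := fun t ht =>
      ih t ⟨ht.1.le, ht.2.trans hx.2⟩
    rw [qIter_succ_eq]
    by_cases h : Odd (n+1)
    · rw [if_pos h]
      exact hstep volume inferInstance _ (qIter_mono_nonneg ν n).1 x hx (hvol x hx) hsub
    · rw [if_neg h]
      exact hstep ν inferInstance _ (qIter_mono_nonneg ν n).1 x hx (hν x hx) hsub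

lemma pIter_two_zero : pIter ν 2 0 = 0 := by
  have h := pIter_even_eq ν 0 0
  norm_num at h
  exact h

lemma qIter_two_zero : qIter ν 2 0 = 0 := by
  have h := qIter_even_eq ν 0 0
  norm_num at h
  exact h

end Iter

/-! ### Main lemma -/

theorem myMain (ν : Measure ℝ) [IsProbabilityMeasure ν] [NullSingletonClass ν] :
    ∀ n : ℕ, ∀ x ∈ Set.Icc (0:ℝ) 1,
      pIter ν (2*n+1) x ≤ (qIter ν 2 x)^n / n.factorial ∧
      pIter ν (2*n) x ≤ (pIter ν 2 x)^n / n.factorial ∧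
      qIter ν (2*n+1) x ≤ (pIter ν 2 x)^n / n.factorial ∧
      qIter ν (2*n) x ≤ (qIter ν 2 x)^n / n.factorial := by
  have hp1mono := (pIter_mono_nonneg ν 1).1
  have hp1nn := (pIter_mono_nonneg ν 1).2
  have hq1mono := (qIter_mono_nonneg ν 1).1
  have hq1nn := (qIter_mono_nonneg ν 1).2
  have hP2mono := (pIter_mono_nonneg ν 2).1
  have hQ2mono := (qIter_mono_nonneg ν 2).1
  have hP2nn := (pIter_mono_nonneg ν 2).2
  have hQ2nn := (qIter_mono_nonneg ν 2).2
  have hP2fun : pIter ν 2 = fun y => ∫ t in Set.Ioc (0:ℝ) y, pIter ν 1 t := by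
    funext y
    have h := pIter_even_eq ν 0 y
    norm_num at h
    exact h
  have hQ2fun : qIter ν 2 = fun y => ∫ t in Set.Ioc (0:ℝ) y, qIter ν 1 t ∂ν := by
    funext y
    have h := qIter_even_eq ν 0 y
    norm_num at h
    exact h
  have hP2cont : Continuous (pIter ν 2) := by
    rw [hP2fun]; exact myCont volume hp1mono hp1nn
  have hQ2cont : Continuous (qIter ν 2) := by
    rw [hQ2fun]; exact myCont ν hq1mono hq1nn
  have habP : ∀ a b : ℝ, 0 ≤ a → a ≤ b →
      (∫ t in Set.Ioc a b, pIter ν 1 t) ≤ pIter ν 2 b - pIter ν 2 a := by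
    intro a b ha hab
    rw [hP2fun]
    exact le_of_eq (myDiff volume hp1mono ha hab).symm
  have habQ : ∀ a b : ℝ, 0 ≤ a → a ≤ b →
      (∫ t in Set.Ioc a b, qIter ν 1 t ∂ν) ≤ qIter ν 2 b - qIter ν 2 a := by
    intro a b ha hab
    rw [hQ2fun]
    exact le_of_eq (myDiff ν hq1mono ha hab).symm
  have hP20 := pIter_two_zero ν
  have hQ20 := qIter_two_zero ν
  intro n
  induction n with
  | zero =>
    intro x hx
    norm_num
    exact ⟨pIter_le_one ν 1 x hx, pIter_le_one ν 0 x hx,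
      qIter_le_one ν 1 x hx, qIter_le_one ν 0 x hx⟩
  | succ n ih =>
    intro x hx
    obtain ⟨hx0, hx1⟩ := hx
    set c := ((n.factorial : ℝ))⁻¹ with hc
    have hc0 : (0:ℝ) ≤ c := by positivity
    have hfacne : (n.factorial : ℝ) ≠ 0 := by
      exact_mod_cast n.factorial_ne_zero
    have halg : ∀ A : ℝ, c * (A^(n+1)/((n:ℝ)+1)) = A^(n+1)/(((n+1).factorial : ℝ)) := by
      intro A
      have hfac : (((n+1).factorial : ℕ) : ℝ) = ((n:ℝ)+1) * (n.factorial : ℝ) := by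
        rw [Nat.factorial_succ]; push_cast; ring
      rw [hfac, hc]
      have hn1 : ((n:ℝ)+1) ≠ 0 := by positivity
      field_simp
    -- (ii) new P2
    have hnewP2 : ∀ y : ℝ, 0 ≤ y → y ≤ 1 →
        pIter ν (2*n+2) y ≤ (pIter ν 2 y)^(n+1)/(((n+1).factorial : ℝ)) := by
      intro y hy0 hy1
      have hbnd : ∀ t ∈ Set.Ioc (0:ℝ) y, pIter ν (2*n+1) t
          ≤ c * ((pIter ν 2 t)^n * pIter ν 1 t) := by
        intro t ht
        have hinner : ∀ s ∈ Set.Ioc (0:ℝ) t, pIter ν (2*n) s ≤ c * (pIter ν 2 t)^n := by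
          intro s hs
          have hs1 : s ∈ Set.Icc (0:ℝ) 1 := ⟨hs.1.le, (hs.2.trans ht.2).trans hy1⟩
          have h1 := (ih s hs1).2.1
          have h2 : (pIter ν 2 s)^n ≤ (pIter ν 2 t)^n :=
            pow_le_pow_left₀ (hP2nn s) (hP2mono hs.2) n
          calc pIter ν (2*n) s ≤ (pIter ν 2 s)^n / n.factorial := h1
            _ = c * (pIter ν 2 s)^n := by rw [hc]; ring
            _ ≤ c * (pIter ν 2 t)^n := mul_le_mul_of_nonneg_left h2 hc0
        have h := myInner ν (pIter ν (2*n)) t (c * (pIter ν 2 t)^n)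
          (pIter_mono_nonneg ν (2*n)).1 hinner
        rw [pIter_odd_eq]
        calc (∫ s in Set.Ioc (0:ℝ) t, pIter ν (2*n) s ∂ν)
            ≤ (c * (pIter ν 2 t)^n) * (ν (Set.Ioc 0 t)).toReal := h
          _ = c * ((pIter ν 2 t)^n * pIter ν 1 t) := by rw [pIter_one_eq]; ring
      have houter := myOuter volume (pIter ν 1) (pIter ν 2) y n hp1mono hp1nn hP2mono hP20
        (pIter ν (2*n+1)) hy0 c hc0 (pIter_mono_nonneg ν (2*n+1)).1 hP2cont.continuousOn
        (fun a b ha hab _ => habP a b ha hab) hbnd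
      rw [pIter_even_eq, ← halg (pIter ν 2 y)]
      exact houter
    -- (iii) new Q4
    have hnewQ4 : ∀ y : ℝ, 0 ≤ y → y ≤ 1 →
        qIter ν (2*n+2) y ≤ (qIter ν 2 y)^(n+1)/(((n+1).factorial : ℝ)) := by
      intro y hy0 hy1
      have hbnd : ∀ t ∈ Set.Ioc (0:ℝ) y, qIter ν (2*n+1) t
          ≤ c * ((qIter ν 2 t)^n * qIter ν 1 t) := by
        intro t ht
        have hinner : ∀ s ∈ Set.Ioc (0:ℝ) t, qIter ν (2*n) s ≤ c * (qIter ν 2 t)^n := by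
          intro s hs
          have hs1 : s ∈ Set.Icc (0:ℝ) 1 := ⟨hs.1.le, (hs.2.trans ht.2).trans hy1⟩
          have h1 := (ih s hs1).2.2.2
          have h2 : (qIter ν 2 s)^n ≤ (qIter ν 2 t)^n :=
            pow_le_pow_left₀ (hQ2nn s) (hQ2mono hs.2) n
          calc qIter ν (2*n) s ≤ (qIter ν 2 s)^n / n.factorial := h1
            _ = c * (qIter ν 2 s)^n := by rw [hc]; ring
            _ ≤ c * (qIter ν 2 t)^n := mul_le_mul_of_nonneg_left h2 hc0
        have h := myInner volume (qIter ν (2*n)) t (c * (qIter ν 2 t)^n)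
          (qIter_mono_nonneg ν (2*n)).1 hinner
        rw [qIter_odd_eq]
        calc (∫ s in Set.Ioc (0:ℝ) t, qIter ν (2*n) s)
            ≤ (c * (qIter ν 2 t)^n) * (volume (Set.Ioc (0:ℝ) t)).toReal := h
          _ = c * ((qIter ν 2 t)^n * qIter ν 1 t) := by
              rw [Real.volume_Ioc, sub_zero, ENNReal.toReal_ofReal ht.1.le,
                qIter_one_eq ν t ht.1.le]
              ring
      have houter := myOuter ν (qIter ν 1) (qIter ν 2) y n hq1mono hq1nn hQ2mono hQ20
        (qIter ν (2*n+1)) hy0 c hc0 (qIter_mono_nonneg ν (2*n+1)).1 hQ2cont.continuousOn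
        (fun a b ha hab _ => habQ a b ha hab) hbnd
      rw [qIter_even_eq, ← halg (qIter ν 2 y)]
      exact houter
    -- (i) new P1
    have hnewP1 : pIter ν (2*n+3) x ≤ (qIter ν 2 x)^(n+1)/(((n+1).factorial : ℝ)) := by
      have hbnd : ∀ t ∈ Set.Ioc (0:ℝ) x, pIter ν (2*n+2) t
          ≤ c * ((qIter ν 2 t)^n * qIter ν 1 t) := by
        intro t ht
        have hinner : ∀ s ∈ Set.Ioc (0:ℝ) t, pIter ν (2*n+1) s ≤ c * (qIter ν 2 t)^n := by
          intro s hs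
          have hs1 : s ∈ Set.Icc (0:ℝ) 1 := ⟨hs.1.le, (hs.2.trans ht.2).trans hx1⟩
          have h1 := (ih s hs1).1
          have h2 : (qIter ν 2 s)^n ≤ (qIter ν 2 t)^n :=
            pow_le_pow_left₀ (hQ2nn s) (hQ2mono hs.2) n
          calc pIter ν (2*n+1) s ≤ (qIter ν 2 s)^n / n.factorial := h1
            _ = c * (qIter ν 2 s)^n := by rw [hc]; ring
            _ ≤ c * (qIter ν 2 t)^n := mul_le_mul_of_nonneg_left h2 hc0
        have h := myInner volume (pIter ν (2*n+1)) t (c * (qIter ν 2 t)^n)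
          (pIter_mono_nonneg ν (2*n+1)).1 hinner
        rw [pIter_even_eq]
        calc (∫ s in Set.Ioc (0:ℝ) t, pIter ν (2*n+1) s)
            ≤ (c * (qIter ν 2 t)^n) * (volume (Set.Ioc (0:ℝ) t)).toReal := h
          _ = c * ((qIter ν 2 t)^n * qIter ν 1 t) := by
              rw [Real.volume_Ioc, sub_zero, ENNReal.toReal_ofReal ht.1.le,
                qIter_one_eq ν t ht.1.le]
              ring
      have houter := myOuter ν (qIter ν 1) (qIter ν 2) x n hq1mono hq1nn hQ2mono hQ20
        (pIter ν (2*n+2)) hx0 c hc0 (pIter_mono_nonneg ν (2*n+2)).1 hQ2cont.continuousOn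
        (fun a b ha hab _ => habQ a b ha hab) hbnd
      have heq : pIter ν (2*n+3) x = ∫ t in Set.Ioc (0:ℝ) x, pIter ν (2*n+2) t ∂ν := by
        have h := pIter_odd_eq ν (n+1) x
        rw [show 2*(n+1)+1 = 2*n+3 from by ring, show 2*(n+1) = 2*n+2 from by ring] at h
        exact h
      rw [heq, ← halg (qIter ν 2 x)]
      exact houter
    -- (iv) new Q3
    have hnewQ3 : qIter ν (2*n+3) x ≤ (pIter ν 2 x)^(n+1)/(((n+1).factorial : ℝ)) := by
      have hbnd : ∀ t ∈ Set.Ioc (0:ℝ) x, qIter ν (2*n+2) t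
          ≤ c * ((pIter ν 2 t)^n * pIter ν 1 t) := by
        intro t ht
        have hinner : ∀ s ∈ Set.Ioc (0:ℝ) t, qIter ν (2*n+1) s ≤ c * (pIter ν 2 t)^n := by
          intro s hs
          have hs1 : s ∈ Set.Icc (0:ℝ) 1 := ⟨hs.1.le, (hs.2.trans ht.2).trans hx1⟩
          have h1 := (ih s hs1).2.2.1
          have h2 : (pIter ν 2 s)^n ≤ (pIter ν 2 t)^n :=
            pow_le_pow_left₀ (hP2nn s) (hP2mono hs.2) n
          calc qIter ν (2*n+1) s ≤ (pIter ν 2 s)^n / n.factorial := h1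
            _ = c * (pIter ν 2 s)^n := by rw [hc]; ring
            _ ≤ c * (pIter ν 2 t)^n := mul_le_mul_of_nonneg_left h2 hc0
        have h := myInner ν (qIter ν (2*n+1)) t (c * (pIter ν 2 t)^n)
          (qIter_mono_nonneg ν (2*n+1)).1 hinner
        rw [qIter_even_eq]
        calc (∫ s in Set.Ioc (0:ℝ) t, qIter ν (2*n+1) s ∂ν)
            ≤ (c * (pIter ν 2 t)^n) * (ν (Set.Ioc 0 t)).toReal := h
          _ = c * ((pIter ν 2 t)^n * pIter ν 1 t) := by rw [pIter_one_eq]; ring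
      have houter := myOuter volume (pIter ν 1) (pIter ν 2) x n hp1mono hp1nn hP2mono hP20
        (qIter ν (2*n+2)) hx0 c hc0 (qIter_mono_nonneg ν (2*n+2)).1 hP2cont.continuousOn
        (fun a b ha hab _ => habP a b ha hab) hbnd
      have heq : qIter ν (2*n+3) x = ∫ t in Set.Ioc (0:ℝ) x, qIter ν (2*n+2) t := by
        have h := qIter_odd_eq ν (n+1) x
        rw [show 2*(n+1)+1 = 2*n+3 from by ring, show 2*(n+1) = 2*n+2 from by ring] at h
        exact h
      rw [heq, ← halg (pIter ν 2 x)]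
      have hbnd2 : ∀ t ∈ Set.Ioc (0:ℝ) x, qIter ν (2*n+2) t
          ≤ c * ((pIter ν 2 t)^n * pIter ν 1 t) := hbnd
      calc (∫ t in Set.Ioc (0:ℝ) x, qIter ν (2*n+2) t)
          ≤ c * ((pIter ν 2 x)^(n+1)/((n:ℝ)+1)) := houter
        _ = c * ((pIter ν 2 x)^(n+1)/((n:ℝ)+1)) := rfl
    refine ⟨?_, ?_, ?_, ?_⟩
    · rw [show 2*(n+1)+1 = 2*n+3 from by ring]
      exact hnewP1
    · rw [show 2*(n+1) = 2*n+2 from by ring]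
      exact hnewP2 x hx0 hx1
    · rw [show 2*(n+1)+1 = 2*n+3 from by ring]
      exact hnewQ3
    · rw [show 2*(n+1) = 2*n+2 from by ring]
      exact hnewQ4 x hx0 hx1

end MyHelpers

/-- Lemma 2.2: for all `x ∈ [0,1]` and `n ∈ ℕ`,
`p_{2n+1}(x) ≤ q_2(x)^n / n!`, `p_{2n}(x) ≤ p_2(x)^n / n!`,
`q_{2n+1}(x) ≤ p_2(x)^n / n!`, `q_{2n}(x) ≤ q_2(x)^n / n!`. -/
theorem stmt0 (ν : Measure ℝ) [IsProbabilityMeasure ν] [NullSingletonClass ν]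
    (hsupp : ν (Set.Icc (0:ℝ) 1)ᶜ = 0)
    (x : ℝ) (hx : x ∈ Set.Icc (0:ℝ) 1) (n : ℕ) :
    pIter ν (2*n+1) x ≤ (qIter ν 2 x)^n / n.factorial ∧
    pIter ν (2*n) x ≤ (pIter ν 2 x)^n / n.factorial ∧
    qIter ν (2*n+1) x ≤ (pIter ν 2 x)^n / n.factorial ∧
    qIter ν (2*n) x ≤ (qIter ν 2 x)^n / n.factorial := by
  exact myMain ν n x hx
end

section
/- For every fixed z ∈ ℝ, the functions x ↦ sq_z(x) and x ↦ cp_z(x) are differentiable on [0,1] with (d/dx) sq_z(x) = z · cq_z(x) and (d/dx) cp_z(x) = −z · sp_z(x) for all x ∈ [0,1]. -/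
open MeasureTheory Real Filter

set_option linter.unusedSectionVars false

section AUX
variable {ν : Measure ℝ}

lemma qIter_succ_odd (ν : Measure ℝ) (n : ℕ) (x : ℝ) :
    qIter ν (2*n+1) x = ∫ t in Set.Ioc (0:ℝ) x, qIter ν (2*n) t := by
  rw [show (2*n+1) = (2*n)+1 from rfl, qIter]
  beta_reduce
  rw [if_pos ⟨n, by ring⟩]

lemma qIter_succ_even (ν : Measure ℝ) (n : ℕ) (x : ℝ) :
    qIter ν (2*n+2) x = ∫ t in Set.Ioc (0:ℝ) x, qIter ν (2*n+1) t ∂ν := by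
  rw [show (2*n+2) = (2*n+1)+1 from rfl, qIter]
  beta_reduce
  rw [if_neg (by rw [Nat.odd_iff]; omega)]

lemma pIter_succ_odd (ν : Measure ℝ) (n : ℕ) (x : ℝ) :
    pIter ν (2*n+1) x = ∫ t in Set.Ioc (0:ℝ) x, pIter ν (2*n) t ∂ν := by
  rw [show (2*n+1) = (2*n)+1 from rfl, pIter]
  beta_reduce
  rw [if_pos ⟨n, by ring⟩]

lemma pIter_succ_even (ν : Measure ℝ) (n : ℕ) (x : ℝ) :
    pIter ν (2*n+2) x = ∫ t in Set.Ioc (0:ℝ) x, pIter ν (2*n+1) t := by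
  rw [show (2*n+2) = (2*n+1)+1 from rfl, pIter]
  beta_reduce
  rw [if_neg (by rw [Nat.odd_iff]; omega)]

/-- basic integrability of a nonneg monotone measurable function on `Ioc a b` -/
lemma integrableOn_Ioc_mono {μ' : Measure ℝ} [IsLocallyFiniteMeasure μ'] {f : ℝ → ℝ}
    (hf : Measurable f) (h0 : ∀ x, 0 ≤ f x) (hm : Monotone f) (a b : ℝ) :
    IntegrableOn f (Set.Ioc a b) μ' := by
  apply Measure.integrableOn_of_bounded (measure_Ioc_lt_top).ne hf.aestronglyMeasurable
    (M := f b)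
  filter_upwards [ae_restrict_mem measurableSet_Ioc] with t ht
  rw [Real.norm_of_nonneg (h0 t)]
  exact hm ht.2

lemma iter_step {μ' : Measure ℝ} [IsLocallyFiniteMeasure μ'] {f : ℝ → ℝ}
    (h : Measurable f ∧ (∀ x, 0 ≤ f x) ∧ Monotone f) :
    Measurable (fun x => ∫ t in Set.Ioc (0:ℝ) x, f t ∂μ') ∧
    (∀ x, 0 ≤ ∫ t in Set.Ioc (0:ℝ) x, f t ∂μ') ∧
    Monotone (fun x => ∫ t in Set.Ioc (0:ℝ) x, f t ∂μ') := by
  obtain ⟨hf, h0, hm⟩ := h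
  have hmono : Monotone (fun x => ∫ t in Set.Ioc (0:ℝ) x, f t ∂μ') := by
    intro a b hab
    exact setIntegral_mono_set (integrableOn_Ioc_mono hf h0 hm 0 b)
      (Filter.Eventually.of_forall h0)
      ((Set.Ioc_subset_Ioc_right hab).eventuallyLE)
  exact ⟨hmono.measurable,
    fun x => setIntegral_nonneg measurableSet_Ioc fun t _ => h0 t, hmono⟩

lemma qIter_prop (ν : Measure ℝ) [IsProbabilityMeasure ν] :
    ∀ n, Measurable (qIter ν n) ∧ (∀ x, 0 ≤ qIter ν n x) ∧ Monotone (qIter ν n)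
  | 0 => ⟨measurable_const, fun _ => zero_le_one, monotone_const⟩
  | (n+1) => by
      by_cases hodd : Odd (n+1)
      · simp only [qIter, if_pos hodd]
        exact iter_step (qIter_prop ν n)
      · simp only [qIter, if_neg hodd]
        exact iter_step (qIter_prop ν n)

lemma pIter_prop (ν : Measure ℝ) [IsProbabilityMeasure ν] :
    ∀ n, Measurable (pIter ν n) ∧ (∀ x, 0 ≤ pIter ν n x) ∧ Monotone (pIter ν n)
  | 0 => ⟨measurable_const, fun _ => zero_le_one, monotone_const⟩
  | (n+1) => by
      by_cases hodd : Odd (n+1)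
      · simp only [pIter, if_pos hodd]
        exact iter_step (pIter_prop ν n)
      · simp only [pIter, if_neg hodd]
        exact iter_step (pIter_prop ν n)

/-- a set integral bounded by a constant, over a set of measure at most 1 -/
lemma setInt_le_const {μ' : Measure ℝ} {s : Set ℝ} (hfin : μ' s ≠ ⊤)
    (hone : (μ' s).toReal ≤ 1) {F : ℝ → ℝ} {C : ℝ} (hC : 0 ≤ C)
    (hb : ∀ t ∈ s, ‖F t‖ ≤ C)
    (hmeas : AEStronglyMeasurable F (μ'.restrict s)) : ∫ t in s, F t ∂μ' ≤ C := by
  calc ∫ t in s, F t ∂μ' ≤ ‖∫ t in s, F t ∂μ'‖ := le_abs_self _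
    _ ≤ C * (μ' s).toReal := norm_setIntegral_le_of_norm_le_const hfin.lt_top hb
    _ ≤ C * 1 := mul_le_mul_of_nonneg_left hone hC
    _ = C := mul_one C

lemma nu_prob_le_one [IsProbabilityMeasure ν] (s : Set ℝ) : (ν s).toReal ≤ 1 :=
  ENNReal.toReal_mono ENNReal.one_ne_top prob_le_one

/-- Lebesgue-integration step for the factorial bounds -/
lemma leb_step {f : ℝ → ℝ} (hf : Measurable f) (h0 : ∀ t, 0 ≤ f t) (hm : Monotone f)
    {k : ℕ} {x : ℝ} (hx : x ∈ Set.Icc (0:ℝ) 1)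
    (hb : ∀ t ∈ Set.Icc (0:ℝ) 1, f t ≤ t^k / k.factorial) :
    ∫ t in Set.Ioc (0:ℝ) x, f t ≤ x^(k+1) / (k+1).factorial := by
  have h1 : ∫ t in Set.Ioc (0:ℝ) x, f t ≤ ∫ t in Set.Ioc (0:ℝ) x, t^k / k.factorial := by
    apply setIntegral_mono_on (integrableOn_Ioc_mono hf h0 hm 0 x)
      ((continuous_pow k).div_const _).integrableOn_Ioc measurableSet_Ioc
    intro t ht
    exact hb t ⟨le_of_lt ht.1, ht.2.trans hx.2⟩
  have h2 : ∫ t in Set.Ioc (0:ℝ) x, (t^k / k.factorial : ℝ) = x^(k+1)/(k+1).factorial := by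
    rw [← intervalIntegral.integral_of_le hx.1, intervalIntegral.integral_div,
      integral_pow]
    rw [Nat.factorial_succ]
    push_cast
    rw [zero_pow (by omega)]
    have hk : ((k:ℝ)+1) ≠ 0 := by positivity
    have hkf : ((k.factorial :ℝ)) ≠ 0 := by positivity
    field_simp
    rw [sub_zero]
  linarith

/-- ν-integration step for the factorial bounds -/
lemma nu_step [IsProbabilityMeasure ν] {f : ℝ → ℝ} (hf : Measurable f) (h0 : ∀ t, 0 ≤ f t)
    {C x : ℝ} (hC : 0 ≤ C) (hb : ∀ t ∈ Set.Ioc (0:ℝ) x, f t ≤ C) :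
    ∫ t in Set.Ioc (0:ℝ) x, f t ∂ν ≤ C := by
  apply setInt_le_const (measure_ne_top _ _) (nu_prob_le_one _) hC ?_ hf.aestronglyMeasurable
  intro t ht
  rw [Real.norm_of_nonneg (h0 t)]
  exact hb t ht

lemma pow_fact_nonneg {x : ℝ} (hx : 0 ≤ x) (k : ℕ) : 0 ≤ x^k / k.factorial := by positivity

lemma q_bounds (ν : Measure ℝ) [IsProbabilityMeasure ν] :
    ∀ n : ℕ, (∀ x ∈ Set.Icc (0:ℝ) 1, qIter ν (2*n) x ≤ x^n / n.factorial) ∧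
      (∀ x ∈ Set.Icc (0:ℝ) 1, qIter ν (2*n+1) x ≤ x^(n+1) / (n+1).factorial) := by
  have oddstep : ∀ n : ℕ, (∀ x ∈ Set.Icc (0:ℝ) 1, qIter ν (2*n) x ≤ x^n / n.factorial) →
      (∀ x ∈ Set.Icc (0:ℝ) 1, qIter ν (2*n+1) x ≤ x^(n+1) / (n+1).factorial) := by
    intro n ih x hx
    obtain ⟨hmeas, h0, hmono⟩ := qIter_prop ν (2*n)
    rw [qIter_succ_odd]
    exact leb_step hmeas h0 hmono hx ih
  intro n
  induction n with
  | zero =>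
    have h0 : ∀ x ∈ Set.Icc (0:ℝ) 1, qIter ν (2*0) x ≤ x^0 / Nat.factorial 0 := by
      intro x hx; simp [qIter]
    exact ⟨h0, oddstep 0 h0⟩
  | succ n ih =>
    have heven : ∀ x ∈ Set.Icc (0:ℝ) 1, qIter ν (2*(n+1)) x ≤ x^(n+1) / (n+1).factorial := by
      intro x hx
      rw [show 2*(n+1) = 2*n+2 by ring, qIter_succ_even]
      apply nu_step (qIter_prop ν (2*n+1)).1 (qIter_prop ν (2*n+1)).2.1 (pow_fact_nonneg hx.1 (n+1))
      intro t ht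
      calc qIter ν (2*n+1) t ≤ t^(n+1) / (n+1).factorial :=
            ih.2 t ⟨le_of_lt ht.1, ht.2.trans hx.2⟩
        _ ≤ x^(n+1) / (n+1).factorial := by
            apply div_le_div_of_nonneg_right ?_ ?_ |>.trans_eq rfl
            · exact pow_le_pow_left₀ (le_of_lt ht.1) ht.2 (n+1)
            · positivity
    exact ⟨heven, oddstep (n+1) heven⟩

lemma p_bounds (ν : Measure ℝ) [IsProbabilityMeasure ν] :
    ∀ n : ℕ, (∀ x ∈ Set.Icc (0:ℝ) 1, pIter ν (2*n) x ≤ x^n / n.factorial) ∧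
      (∀ x ∈ Set.Icc (0:ℝ) 1, pIter ν (2*n+1) x ≤ x^n / n.factorial) := by
  have oddstep : ∀ n : ℕ, (∀ x ∈ Set.Icc (0:ℝ) 1, pIter ν (2*n) x ≤ x^n / n.factorial) →
      (∀ x ∈ Set.Icc (0:ℝ) 1, pIter ν (2*n+1) x ≤ x^n / n.factorial) := by
    intro n ih x hx
    rw [pIter_succ_odd]
    apply nu_step (pIter_prop ν (2*n)).1 (pIter_prop ν (2*n)).2.1 (pow_fact_nonneg hx.1 n)
    intro t ht
    calc pIter ν (2*n) t ≤ t^n / n.factorial := ih t ⟨le_of_lt ht.1, ht.2.trans hx.2⟩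
      _ ≤ x^n / n.factorial := by
          apply div_le_div_of_nonneg_right (pow_le_pow_left₀ (le_of_lt ht.1) ht.2 n) ?_
          positivity
  intro n
  induction n with
  | zero =>
    have h0 : ∀ x ∈ Set.Icc (0:ℝ) 1, pIter ν (2*0) x ≤ x^0 / Nat.factorial 0 := by
      intro x hx; simp [pIter]
    exact ⟨h0, oddstep 0 h0⟩
  | succ n ih =>
    have heven : ∀ x ∈ Set.Icc (0:ℝ) 1, pIter ν (2*(n+1)) x ≤ x^(n+1) / (n+1).factorial := by
      intro x hx
      rw [show 2*(n+1) = 2*n+2 by ring, pIter_succ_even]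
      obtain ⟨hmeas, h0, hmono⟩ := pIter_prop ν (2*n+1)
      exact leb_step hmeas h0 hmono hx ih.2
    exact ⟨heven, oddstep (n+1) heven⟩

end AUX

section CONT
variable {ν : Measure ℝ}

lemma nu_Ioc_small [IsProbabilityMeasure ν] [NullSingletonClass ν] (x : ℝ) {ε : ℝ} (hε : 0 < ε) :
    ∃ δ : ℝ, 0 < δ ∧ (ν (Set.Ioc (x-δ) (x+δ))).toReal < ε := by
  have hinter : ⋂ n : ℕ, Set.Ioc (x - 1/(n+1)) (x + 1/(n+1)) = {x} := by
    ext t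
    simp only [Set.mem_iInter, Set.mem_Ioc, Set.mem_singleton_iff]
    constructor
    · intro h
      have h1 : t ≤ x := by
        by_contra hc
        push_neg at hc
        obtain ⟨n, hn⟩ := exists_nat_one_div_lt (sub_pos.mpr hc)
        have := (h n).2
        linarith
      have h2 : x ≤ t := by
        by_contra hc
        push_neg at hc
        obtain ⟨n, hn⟩ := exists_nat_one_div_lt (sub_pos.mpr hc)
        have := (h n).1
        linarith
      linarith
    · rintro rfl n
      have : (0:ℝ) < 1/(n+1) := by positivity
      constructor <;> linarith
  have hanti : Antitone (fun n : ℕ => Set.Ioc (x - 1/(n+1)) (x + 1/(n+1))) := by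
    intro m n hmn
    have h1 : (1:ℝ)/(n+1) ≤ 1/(m+1) := by
      apply one_div_le_one_div_of_le (by positivity)
      exact_mod_cast by omega
    exact Set.Ioc_subset_Ioc (by linarith) (by linarith)
  have htend := tendsto_measure_iInter_atTop
    (μ := ν) (s := fun n : ℕ => Set.Ioc (x - 1/(n+1)) (x + 1/(n+1)))
    (fun n => measurableSet_Ioc.nullMeasurableSet) hanti ⟨0, measure_ne_top _ _⟩
  rw [hinter, measure_singleton] at htend
  have htoReal := (ENNReal.tendsto_toReal (by simp)).comp htend
  simp only [Function.comp, ENNReal.toReal_zero] at htoReal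
  obtain ⟨n, hn⟩ := (htoReal.eventually (gt_mem_nhds hε)).exists
  exact ⟨1/(n+1), by positivity, hn⟩

lemma contOn_nu_int [IsProbabilityMeasure ν] [NullSingletonClass ν] {f : ℝ → ℝ}
    (hf : Measurable f) (h0 : ∀ x, 0 ≤ f x) (hm : Monotone f) :
    ContinuousOn (fun x => ∫ t in Set.Ioc (0:ℝ) x, f t ∂ν) (Set.Icc (0:ℝ) 1) := by
  set g := fun x => ∫ t in Set.Ioc (0:ℝ) x, f t ∂ν with hgdef
  intro x hx
  rw [Metric.continuousWithinAt_iff]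
  intro ε hε
  set M := f 1 + 1 with hMdef
  have hM : 0 < M := by have := h0 1; simp only [hMdef]; linarith
  obtain ⟨δ, hδ, hsmall⟩ := nu_Ioc_small (ν := ν) x (div_pos hε hM)
  refine ⟨δ, hδ, fun {y} hy hyx => ?_⟩
  have main : ∀ a b : ℝ, 0 ≤ a → a ≤ b → b ≤ 1 → x - δ ≤ a → b ≤ x + δ →
      |g b - g a| < ε := by
    intro a b ha hab hb1 hax hbx
    have hsplit : g b = g a + ∫ t in Set.Ioc a b, f t ∂ν := by
      have hu := setIntegral_union (f := f) (μ := ν) (Set.Ioc_disjoint_Ioc_of_le le_rfl)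
        measurableSet_Ioc (integrableOn_Ioc_mono hf h0 hm 0 a)
        (integrableOn_Ioc_mono hf h0 hm a b)
      rw [Set.Ioc_union_Ioc_eq_Ioc ha hab] at hu
      exact hu
    have hnn : 0 ≤ ∫ t in Set.Ioc a b, f t ∂ν :=
      setIntegral_nonneg measurableSet_Ioc fun t _ => h0 t
    have hub : ∫ t in Set.Ioc a b, f t ∂ν ≤ M * (ν (Set.Ioc a b)).toReal := by
      have := norm_setIntegral_le_of_norm_le_const (μ := ν) (s := Set.Ioc a b) (C := M)
        (measure_lt_top _ _) (fun t ht => by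
          rw [Real.norm_of_nonneg (h0 t)]
          have : f t ≤ f 1 := hm (ht.2.trans hb1)
          simp only [hMdef]; linarith)
      calc ∫ t in Set.Ioc a b, f t ∂ν ≤ ‖∫ t in Set.Ioc a b, f t ∂ν‖ := le_abs_self _
        _ ≤ M * (ν (Set.Ioc a b)).toReal := this
    have hsub : (ν (Set.Ioc a b)).toReal ≤ (ν (Set.Ioc (x-δ) (x+δ))).toReal :=
      ENNReal.toReal_mono (measure_ne_top _ _)
        (measure_mono (Set.Ioc_subset_Ioc hax hbx))
    have : |g b - g a| = ∫ t in Set.Ioc a b, f t ∂ν := by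
      rw [hsplit]; rw [abs_of_nonneg (by linarith)]; ring
    rw [this]
    calc ∫ t in Set.Ioc a b, f t ∂ν ≤ M * (ν (Set.Ioc a b)).toReal := hub
      _ ≤ M * (ν (Set.Ioc (x-δ) (x+δ))).toReal := by
          exact mul_le_mul_of_nonneg_left hsub (le_of_lt hM)
      _ < M * (ε / M) := by
          apply mul_lt_mul_of_pos_left hsmall hM
      _ = ε := by field_simp
  rw [Real.dist_eq] at hyx ⊢
  rcases le_total x y with hxy | hxy
  · exact main x y hx.1 hxy hy.2 (by linarith) (by cases abs_lt.mp hyx; linarith)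
  · have := main y x hy.1 hxy hx.2 (by cases abs_lt.mp hyx; linarith) (by linarith)
    rwa [abs_sub_comm] at this

end CONT

section MAIN
variable (ν : Measure ℝ) [IsProbabilityMeasure ν]

lemma q_even_le (n : ℕ) {x : ℝ} (hx : x ∈ Set.Icc (0:ℝ) 1) :
    qIter ν (2*n) x ≤ 1 / n.factorial := by
  refine ((q_bounds ν n).1 x hx).trans ?_
  gcongr
  exact pow_le_one₀ hx.1 hx.2

lemma p_even_le (n : ℕ) {x : ℝ} (hx : x ∈ Set.Icc (0:ℝ) 1) :
    pIter ν (2*n) x ≤ 1 / n.factorial := by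
  refine ((p_bounds ν n).1 x hx).trans ?_
  gcongr
  exact pow_le_one₀ hx.1 hx.2

lemma p_odd_le (n : ℕ) {x : ℝ} (hx : x ∈ Set.Icc (0:ℝ) 1) :
    pIter ν (2*n+1) x ≤ 1 / n.factorial := by
  refine ((p_bounds ν n).2 x hx).trans ?_
  gcongr
  exact pow_le_one₀ hx.1 hx.2

lemma q_term_bound (z : ℝ) (n : ℕ) {x : ℝ} (hx : x ∈ Set.Icc (0:ℝ) 1) :
    ‖(-1:ℝ)^n * z^(2*n) * qIter ν (2*n) x‖ ≤ (z^2)^n / n.factorial := by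
  have h0 := (qIter_prop ν (2*n)).2.1 x
  rw [Real.norm_eq_abs, abs_mul, abs_mul, abs_pow, abs_pow, abs_neg, abs_one, one_pow, one_mul,
    abs_of_nonneg h0]
  calc |z|^(2*n) * qIter ν (2*n) x ≤ |z|^(2*n) * (1/n.factorial) :=
        mul_le_mul_of_nonneg_left (q_even_le ν n hx) (by positivity)
    _ = (z^2)^n / n.factorial := by rw [pow_mul, sq_abs]; ring

lemma q_term_bound' (z : ℝ) (n : ℕ) {x : ℝ} (hx : x ∈ Set.Icc (0:ℝ) 1) :
    ‖(-1:ℝ)^n * z^(2*n+1) * qIter ν (2*n) x‖ ≤ (z^2)^n / n.factorial * |z| := by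
  have h0 := (qIter_prop ν (2*n)).2.1 x
  rw [Real.norm_eq_abs, abs_mul, abs_mul, abs_pow, abs_pow, abs_neg, abs_one, one_pow, one_mul,
    abs_of_nonneg h0]
  calc |z|^(2*n+1) * qIter ν (2*n) x ≤ |z|^(2*n+1) * (1/n.factorial) :=
        mul_le_mul_of_nonneg_left (q_even_le ν n hx) (by positivity)
    _ = (z^2)^n / n.factorial * |z| := by rw [pow_succ, pow_mul, sq_abs]; ring

lemma p_term_bound_even (z : ℝ) (n : ℕ) {x : ℝ} (hx : x ∈ Set.Icc (0:ℝ) 1) :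
    ‖(-1:ℝ)^n * z^(2*n) * pIter ν (2*n) x‖ ≤ (z^2)^n / n.factorial := by
  have h0 := (pIter_prop ν (2*n)).2.1 x
  rw [Real.norm_eq_abs, abs_mul, abs_mul, abs_pow, abs_pow, abs_neg, abs_one, one_pow, one_mul,
    abs_of_nonneg h0]
  calc |z|^(2*n) * pIter ν (2*n) x ≤ |z|^(2*n) * (1/n.factorial) :=
        mul_le_mul_of_nonneg_left (p_even_le ν n hx) (by positivity)
    _ = (z^2)^n / n.factorial := by rw [pow_mul, sq_abs]; ring

lemma p_term_bound_odd (z : ℝ) (n : ℕ) {x : ℝ} (hx : x ∈ Set.Icc (0:ℝ) 1) :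
    ‖(-1:ℝ)^n * z^(2*n+1) * pIter ν (2*n+1) x‖ ≤ (z^2)^n / n.factorial * |z| := by
  have h0 := (pIter_prop ν (2*n+1)).2.1 x
  rw [Real.norm_eq_abs, abs_mul, abs_mul, abs_pow, abs_pow, abs_neg, abs_one, one_pow, one_mul,
    abs_of_nonneg h0]
  calc |z|^(2*n+1) * pIter ν (2*n+1) x ≤ |z|^(2*n+1) * (1/n.factorial) :=
        mul_le_mul_of_nonneg_left (p_odd_le ν n hx) (by positivity)
    _ = (z^2)^n / n.factorial * |z| := by rw [pow_succ, pow_mul, sq_abs]; ring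

lemma p_term_bound_mixed (z : ℝ) (n : ℕ) {x : ℝ} (hx : x ∈ Set.Icc (0:ℝ) 1) :
    ‖(-1:ℝ)^(n+1) * z^(2*(n+1)) * pIter ν (2*n+1) x‖ ≤ z^2 * ((z^2)^n / n.factorial) := by
  have h0 := (pIter_prop ν (2*n+1)).2.1 x
  rw [Real.norm_eq_abs, abs_mul, abs_mul, abs_pow, abs_pow, abs_neg, abs_one, one_pow, one_mul,
    abs_of_nonneg h0]
  calc |z|^(2*(n+1)) * pIter ν (2*n+1) x ≤ |z|^(2*(n+1)) * (1/n.factorial) :=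
        mul_le_mul_of_nonneg_left (p_odd_le ν n hx) (by positivity)
    _ = z^2 * ((z^2)^n / n.factorial) := by rw [pow_mul, sq_abs, pow_succ]; ring

lemma vol_Ioc_le_one {y : ℝ} (hy : y ∈ Set.Icc (0:ℝ) 1) :
    (volume (Set.Ioc (0:ℝ) y)).toReal ≤ 1 := by
  rw [Real.volume_Ioc, ENNReal.toReal_ofReal (by linarith [hy.1])]
  linarith [hy.2]

lemma sqF_eq_integral (z : ℝ) {y : ℝ} (hy : y ∈ Set.Icc (0:ℝ) 1) :
    sqF ν z y = ∫ t in Set.Ioc (0:ℝ) y, z * cqF ν z t := by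
  have hq := qIter_prop ν
  have hInt : ∀ n : ℕ, Integrable (fun t => (-1:ℝ)^n * z^(2*n+1) * qIter ν (2*n) t)
      (volume.restrict (Set.Ioc (0:ℝ) y)) := fun n =>
    (integrableOn_Ioc_mono (hq (2*n)).1 (hq (2*n)).2.1 (hq (2*n)).2.2 0 y).const_mul _
  have hsumnorm : Summable (fun n : ℕ =>
      ∫ t in Set.Ioc (0:ℝ) y, ‖(-1:ℝ)^n * z^(2*n+1) * qIter ν (2*n) t‖) := by
    apply Summable.of_nonneg_of_le
      (fun n => integral_nonneg fun t => norm_nonneg _)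
      (fun n => ?_) ((Real.summable_pow_div_factorial (z^2)).mul_right |z|)
    apply setInt_le_const measure_Ioc_lt_top.ne (vol_Ioc_le_one hy) (by positivity)
      (fun t ht => ?_) (hInt n).1.norm
    rw [norm_norm]
    exact q_term_bound' ν z n ⟨le_of_lt ht.1, ht.2.trans hy.2⟩
  calc sqF ν z y
      = ∑' n : ℕ, ∫ t in Set.Ioc (0:ℝ) y, (-1:ℝ)^n * z^(2*n+1) * qIter ν (2*n) t := by
        refine tsum_congr fun n => ?_
        rw [qIter_succ_odd, ← integral_const_mul]
    _ = ∫ t in Set.Ioc (0:ℝ) y, ∑' n : ℕ, (-1:ℝ)^n * z^(2*n+1) * qIter ν (2*n) t :=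
        integral_tsum_of_summable_integral_norm hInt hsumnorm
    _ = ∫ t in Set.Ioc (0:ℝ) y, z * cqF ν z t := by
        refine integral_congr_ae (Filter.Eventually.of_forall fun t => ?_)
        beta_reduce
        rw [show z * cqF ν z t = ∑' n : ℕ, z * ((-1:ℝ)^n * z^(2*n) * qIter ν (2*n) t) from
          (tsum_mul_left).symm]
        refine tsum_congr fun n => ?_
        rw [pow_succ]
        ring

lemma cpF_eq_integral (z : ℝ) {y : ℝ} (hy : y ∈ Set.Icc (0:ℝ) 1) :
    cpF ν z y = 1 + ∫ t in Set.Ioc (0:ℝ) y, (-z) * spF ν z t := by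
  have hp := pIter_prop ν
  have hsum0 : Summable (fun n : ℕ => (-1:ℝ)^n * z^(2*n) * pIter ν (2*n) y) :=
    Summable.of_norm (Summable.of_nonneg_of_le (fun n => norm_nonneg _)
      (fun n => p_term_bound_even ν z n hy) (Real.summable_pow_div_factorial _))
  have hInt : ∀ n : ℕ, Integrable (fun t => (-1:ℝ)^(n+1) * z^(2*(n+1)) * pIter ν (2*n+1) t)
      (volume.restrict (Set.Ioc (0:ℝ) y)) := fun n =>
    (integrableOn_Ioc_mono (hp (2*n+1)).1 (hp (2*n+1)).2.1 (hp (2*n+1)).2.2 0 y).const_mul _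
  have hsumnorm : Summable (fun n : ℕ =>
      ∫ t in Set.Ioc (0:ℝ) y, ‖(-1:ℝ)^(n+1) * z^(2*(n+1)) * pIter ν (2*n+1) t‖) := by
    apply Summable.of_nonneg_of_le
      (fun n => integral_nonneg fun t => norm_nonneg _)
      (fun n => ?_) ((Real.summable_pow_div_factorial (z^2)).mul_left (z^2))
    apply setInt_le_const measure_Ioc_lt_top.ne (vol_Ioc_le_one hy) (by positivity)
      (fun t ht => ?_) (hInt n).1.norm
    rw [norm_norm]
    exact p_term_bound_mixed ν z n ⟨le_of_lt ht.1, ht.2.trans hy.2⟩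
  rw [show cpF ν z y = ∑' n : ℕ, (-1:ℝ)^n * z^(2*n) * pIter ν (2*n) y from rfl,
    Summable.tsum_eq_zero_add hsum0]
  congr 1
  · norm_num [pIter]
  calc ∑' n : ℕ, (-1:ℝ)^(n+1) * z^(2*(n+1)) * pIter ν (2*(n+1)) y
      = ∑' n : ℕ, ∫ t in Set.Ioc (0:ℝ) y, (-1:ℝ)^(n+1) * z^(2*(n+1)) * pIter ν (2*n+1) t := by
        refine tsum_congr fun n => ?_
        rw [show pIter ν (2*(n+1)) y = pIter ν (2*n+2) y by norm_num [show 2*(n+1) = 2*n+2 by ring],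
          pIter_succ_even, ← integral_const_mul]
    _ = ∫ t in Set.Ioc (0:ℝ) y, ∑' n : ℕ, (-1:ℝ)^(n+1) * z^(2*(n+1)) * pIter ν (2*n+1) t :=
        integral_tsum_of_summable_integral_norm hInt hsumnorm
    _ = ∫ t in Set.Ioc (0:ℝ) y, (-z) * spF ν z t := by
        refine integral_congr_ae (Filter.Eventually.of_forall fun t => ?_)
        beta_reduce
        rw [show (-z) * spF ν z t = ∑' n : ℕ, (-z) * ((-1:ℝ)^n * z^(2*n+1) * pIter ν (2*n+1) t) from
          (tsum_mul_left).symm]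
        refine tsum_congr fun n => ?_
        rw [show 2*(n+1) = (2*n+1)+1 by ring, pow_succ z (2*n+1), pow_succ (-1:ℝ) n]
        ring

variable [NullSingletonClass ν]

lemma contOn_cqF (z : ℝ) : ContinuousOn (fun x => cqF ν z x) (Set.Icc (0:ℝ) 1) := by
  unfold cqF
  refine continuousOn_tsum (u := fun n : ℕ => (z^2)^n / n.factorial) (fun n => ?_)
    (Real.summable_pow_div_factorial _) (fun n x hx => q_term_bound ν z n hx)
  match n with
  | 0 => exact continuousOn_const.mul continuousOn_const
  | (m+1) =>
    refine continuousOn_const.mul ?_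
    refine (contOn_nu_int (ν := ν) (qIter_prop ν (2*m+1)).1 (qIter_prop ν (2*m+1)).2.1
      (qIter_prop ν (2*m+1)).2.2).congr fun x _ => ?_
    rw [show 2*(m+1) = 2*m+2 by ring, qIter_succ_even]

lemma contOn_spF (z : ℝ) : ContinuousOn (fun x => spF ν z x) (Set.Icc (0:ℝ) 1) := by
  unfold spF
  refine continuousOn_tsum (u := fun n : ℕ => (z^2)^n / n.factorial * |z|) (fun n => ?_)
    ((Real.summable_pow_div_factorial _).mul_right _)
    (fun n x hx => p_term_bound_odd ν z n hx)
  refine continuousOn_const.mul ?_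
  refine (contOn_nu_int (ν := ν) (pIter_prop ν (2*n)).1 (pIter_prop ν (2*n)).2.1
    (pIter_prop ν (2*n)).2.2).congr fun x _ => ?_
  rw [pIter_succ_odd]

end MAIN


/-- For fixed `z`, `x ↦ sq_z(x)` and `x ↦ cp_z(x)` are differentiable on `[0,1]` with
`(d/dx) sq_z(x) = z·cq_z(x)` and `(d/dx) cp_z(x) = −z·sp_z(x)`. -/
theorem stmt2 (ν : Measure ℝ) [IsProbabilityMeasure ν] [NullSingletonClass ν]
    (hsupp : ν (Set.Icc (0:ℝ) 1)ᶜ = 0) (z : ℝ) :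
    ∀ x ∈ Set.Icc (0:ℝ) 1,
      HasDerivWithinAt (fun y => sqF ν z y) (z * cqF ν z x) (Set.Icc (0:ℝ) 1) x ∧
      HasDerivWithinAt (fun y => cpF ν z y) (-z * spF ν z x) (Set.Icc (0:ℝ) 1) x := by
  intro x hx
  haveI : Fact (x ∈ Set.Icc (0:ℝ) 1) := ⟨hx⟩
  have derivAux : ∀ g : ℝ → ℝ, ContinuousOn g (Set.Icc (0:ℝ) 1) →
      HasDerivWithinAt (fun y => ∫ t in (0:ℝ)..y, g t) (g x) (Set.Icc (0:ℝ) 1) x := by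
    intro g hgc
    have hint : IntervalIntegrable g volume 0 x := by
      apply ContinuousOn.intervalIntegrable
      rw [Set.uIcc_of_le hx.1]
      exact hgc.mono (Set.Icc_subset_Icc_right hx.2)
    have hmeas : StronglyMeasurableAtFilter g (nhdsWithin x (Set.Icc (0:ℝ) 1)) :=
      ⟨Set.Icc 0 1, self_mem_nhdsWithin, hgc.aestronglyMeasurable measurableSet_Icc⟩
    exact intervalIntegral.integral_hasDerivWithinAt_right hint hmeas (hgc x hx)
  constructor
  · have hgc : ContinuousOn (fun t => z * cqF ν z t) (Set.Icc (0:ℝ) 1) :=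
      continuousOn_const.mul (contOn_cqF ν z)
    refine (derivAux _ hgc).congr (fun y hy => ?_) ?_
    · rw [sqF_eq_integral ν z hy, intervalIntegral.integral_of_le hy.1]
    · rw [sqF_eq_integral ν z hx, intervalIntegral.integral_of_le hx.1]
  · have hgc : ContinuousOn (fun t => (-z) * spF ν z t) (Set.Icc (0:ℝ) 1) :=
      continuousOn_const.mul (contOn_spF ν z)
    have hD := (derivAux _ hgc).const_add 1
    refine hD.congr (fun y hy => ?_) ?_
    · rw [cpF_eq_integral ν z hy, intervalIntegral.integral_of_le hy.1]
    · rw [cpF_eq_integral ν z hx, intervalIntegral.integral_of_le hx.1]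
end

section
/- Let z ∈ (0, ∞) satisfy sinp(z) = 0. Then z is not a local extremum of the function sinp : ℝ → ℝ. -/
open MeasureTheory Real Filter

set_option linter.unusedSectionVars false
namespace Stmt7Aux

variable (ν : Measure ℝ) [IsProbabilityMeasure ν] [NullSingletonClass ν]

lemma pIter_zero (x : ℝ) : pIter ν 0 x = 1 := rfl

lemma pIter_odd (k : ℕ) (x : ℝ) :
    pIter ν (2*k+1) x = ∫ t in Set.Ioc (0:ℝ) x, pIter ν (2*k) t ∂ν := by
  have h : Odd (2*k+1) := by rw [Nat.odd_iff]; omega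
  simp only [pIter, if_pos h]

lemma pIter_even (k : ℕ) (x : ℝ) :
    pIter ν (2*k+2) x = ∫ t in Set.Ioc (0:ℝ) x, pIter ν (2*k+1) t := by
  have h : ¬ Odd (2*k+1+1) := by rw [Nat.odd_iff]; omega
  have : (2*k+2) = (2*k+1)+1 := rfl
  rw [this]
  simp only [pIter, if_neg h]

lemma mono_nonneg_int (μ' : Measure ℝ) [IsLocallyFiniteMeasure μ'] {f : ℝ → ℝ}
    (hm : Monotone f) (h0 : ∀ x, 0 ≤ f x) :
    (∀ x : ℝ, IntegrableOn f (Set.Ioc 0 x) μ') ∧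
    Monotone (fun x => ∫ t in Set.Ioc (0:ℝ) x, f t ∂μ') ∧
    (∀ x, 0 ≤ ∫ t in Set.Ioc (0:ℝ) x, f t ∂μ') := by
  have hint : ∀ x : ℝ, IntegrableOn f (Set.Ioc 0 x) μ' := by
    intro x
    exact ((hm.monotoneOn _).integrableOn_isCompact isCompact_Icc).mono_set
      Set.Ioc_subset_Icc_self
  refine ⟨hint, ?_, fun x => integral_nonneg fun t => h0 t⟩
  intro a b hab
  exact setIntegral_mono_set (hint b) (Filter.Eventually.of_forall fun t => h0 t)
    ((Set.Ioc_subset_Ioc_right hab).eventuallyLE)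

lemma pIter_mono_nonneg : ∀ n : ℕ, Monotone (pIter ν n) ∧ ∀ x, 0 ≤ pIter ν n x := by
  intro n
  induction n with
  | zero => exact ⟨monotone_const, fun x => by norm_num [pIter_zero]⟩
  | succ n ih =>
    have hν := mono_nonneg_int ν ih.1 ih.2
    have hLeb := mono_nonneg_int volume ih.1 ih.2
    by_cases hodd : Odd (n+1)
    · have he : pIter ν (n+1) = fun x => ∫ t in Set.Ioc (0:ℝ) x, pIter ν n t ∂ν := by
        funext x; simp only [pIter, if_pos hodd]
      rw [he]; exact ⟨hν.2.1, hν.2.2⟩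
    · have he : pIter ν (n+1) = fun x => ∫ t in Set.Ioc (0:ℝ) x, pIter ν n t := by
        funext x; simp only [pIter, if_neg hodd]
      rw [he]; exact ⟨hLeb.2.1, hLeb.2.2⟩


lemma pIter_mono (n : ℕ) : Monotone (pIter ν n) := (pIter_mono_nonneg ν n).1
lemma pIter_nonneg (n : ℕ) (x : ℝ) : 0 ≤ pIter ν n x := (pIter_mono_nonneg ν n).2 x

lemma pIter_intOn (n : ℕ) (μ' : Measure ℝ) [IsLocallyFiniteMeasure μ'] (x : ℝ) :
    IntegrableOn (pIter ν n) (Set.Ioc 0 x) μ' :=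
  (mono_nonneg_int μ' (pIter_mono ν n) (pIter_nonneg ν n)).1 x

lemma measure_Ioc_toReal_le_one (x : ℝ) : (ν (Set.Ioc 0 x)).toReal ≤ 1 := by
  have h1 : ν (Set.Ioc 0 x) ≤ 1 := prob_le_one
  have := ENNReal.toReal_mono (by norm_num) h1
  simpa using this

lemma pIter_bound (k : ℕ) : ∀ x ∈ Set.Icc (0:ℝ) 1,
    pIter ν (2*k) x ≤ x^k / k.factorial ∧ pIter ν (2*k+1) x ≤ x^k / k.factorial := by
  induction k with
  | zero =>
    intro x hx
    constructor
    · simp [pIter_zero]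
    · have h1 : pIter ν (2*0+1) x = ∫ t in Set.Ioc (0:ℝ) x, pIter ν (2*0) t ∂ν :=
        pIter_odd ν 0 x
      rw [h1]
      simp only [Nat.mul_zero, pIter_zero]
      rw [setIntegral_const]
      simpa using measure_Ioc_toReal_le_one ν x
  | succ k ih =>
    have heven : ∀ x ∈ Set.Icc (0:ℝ) 1, pIter ν (2*(k+1)) x ≤ x^(k+1) / (k+1).factorial := by
      intro x hx
      have hx0 := hx.1
      have hx1 := hx.2
      have h2 : (2*(k+1)) = 2*k+2 := by ring
      rw [h2, pIter_even]
      have hmono : ∀ t ∈ Set.Ioc (0:ℝ) x, pIter ν (2*k+1) t ≤ t^k / k.factorial := by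
        intro t ht
        exact (ih t ⟨le_of_lt ht.1, le_trans ht.2 hx1⟩).2
      have hint1 : IntegrableOn (pIter ν (2*k+1)) (Set.Ioc 0 x) volume :=
        pIter_intOn ν _ _ x
      have hint2 : IntegrableOn (fun t : ℝ => t^k / k.factorial) (Set.Ioc 0 x) volume :=
        ((continuous_pow k).div_const _).integrableOn_Ioc
      have hle := setIntegral_mono_on hint1 hint2 measurableSet_Ioc hmono
      refine le_trans hle ?_
      have hpow : ∫ t in Set.Ioc (0:ℝ) x, (t^k / k.factorial) = (x^(k+1)/(k+1)) / k.factorial := by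
        rw [integral_div, ← intervalIntegral.integral_of_le hx0, integral_pow]
        norm_num
      rw [hpow]
      apply le_of_eq
      rw [Nat.factorial_succ]
      push_cast
      rw [div_div]
    intro x hx
    refine ⟨heven x hx, ?_⟩
    rw [pIter_odd]
    have hfac : (0:ℝ) ≤ x^(k+1) / (k+1).factorial := div_nonneg (pow_nonneg hx.1 _) (Nat.cast_nonneg _)
    have hb : ∀ t ∈ Set.Ioc (0:ℝ) x, pIter ν (2*(k+1)) t ≤ x^(k+1) / (k+1).factorial := by
      intro t ht
      refine le_trans (heven t ⟨le_of_lt ht.1, le_trans ht.2 hx.2⟩) ?_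
      have hfp : (0:ℝ) < ((k+1).factorial : ℝ) := by exact_mod_cast Nat.factorial_pos (k+1)
      exact (div_le_div_iff_of_pos_right hfp).2 (pow_le_pow_left₀ ht.1.le ht.2 _)
    have hint1 : IntegrableOn (pIter ν (2*(k+1))) (Set.Ioc 0 x) ν := pIter_intOn ν _ _ x
    have hle := setIntegral_mono_on hint1 (integrableOn_const (by
      exact (measure_lt_top _ _).ne)) measurableSet_Ioc hb
    refine le_trans hle ?_
    rw [setIntegral_const, smul_eq_mul]
    calc (ν (Set.Ioc 0 x)).toReal * (x^(k+1) / (k+1).factorial)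
        ≤ 1 * (x^(k+1) / (k+1).factorial) := by
          exact mul_le_mul_of_nonneg_right (measure_Ioc_toReal_le_one ν x) hfac
      _ = x^(k+1) / (k+1).factorial := one_mul _

lemma ibp {f g : ℝ → ℝ} (hfm : Monotone f) (hgm : Monotone g)
    (hf0 : ∀ x, 0 ≤ f x) (hg0 : ∀ x, 0 ≤ g x) :
    (∫ t in Set.Ioc (0:ℝ) 1, f t * (∫ s in Set.Ioc (0:ℝ) t, g s) ∂ν)
      + (∫ s in Set.Ioc (0:ℝ) 1, (∫ t in Set.Ioc (0:ℝ) s, f t ∂ν) * g s)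
      = (∫ t in Set.Ioc (0:ℝ) 1, f t ∂ν) * (∫ s in Set.Ioc (0:ℝ) 1, g s) := by
  set μ1 : Measure ℝ := ν.restrict (Set.Ioc 0 1) with hμ1
  set μ2 : Measure ℝ := volume.restrict (Set.Ioc 0 1) with hμ2
  have hfin2 : IsFiniteMeasure μ2 := by
    constructor
    rw [hμ2, Measure.restrict_apply_univ]
    simp [Real.volume_Ioc]
  have hmeas : Measurable (fun p : ℝ × ℝ => f p.1 * g p.2) :=
    (hfm.measurable.comp measurable_fst).mul (hgm.measurable.comp measurable_snd)
  have hprodres : μ1.prod μ2 = (ν.prod volume).restrict ((Set.Ioc (0:ℝ) 1) ×ˢ (Set.Ioc (0:ℝ) 1)) :=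
    Measure.prod_restrict _ _
  have hae : ∀ᵐ p ∂(μ1.prod μ2), p ∈ (Set.Ioc (0:ℝ) 1) ×ˢ (Set.Ioc (0:ℝ) 1) := by
    rw [hprodres]
    exact ae_restrict_mem (measurableSet_Ioc.prod measurableSet_Ioc)
  have hFub : Integrable (fun p : ℝ × ℝ => f p.1 * g p.2) (μ1.prod μ2) := by
    apply Integrable.mono' (integrable_const (f 1 * g 1)) hmeas.aestronglyMeasurable
    filter_upwards [hae] with p hp
    have h1 : f p.1 ≤ f 1 := hfm hp.1.2
    have h2 : g p.2 ≤ g 1 := hgm hp.2.2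
    rw [Real.norm_eq_abs, abs_of_nonneg (mul_nonneg (hf0 _) (hg0 _))]
    exact mul_le_mul h1 h2 (hg0 _) (hf0 _)
  have hA : MeasurableSet {p : ℝ × ℝ | p.2 < p.1} :=
    measurableSet_lt measurable_snd measurable_fst
  have hsplit := integral_add_compl hA hFub
  have hRHS : ∫ p, f p.1 * g p.2 ∂(μ1.prod μ2)
      = (∫ t in Set.Ioc (0:ℝ) 1, f t ∂ν) * (∫ s in Set.Ioc (0:ℝ) 1, g s) :=
    integral_prod_mul f g
  -- part 1 : over {s < t}
  have hpart1 : (∫ p in {p : ℝ × ℝ | p.2 < p.1}, f p.1 * g p.2 ∂(μ1.prod μ2))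
      = ∫ t in Set.Ioc (0:ℝ) 1, f t * (∫ s in Set.Ioc (0:ℝ) t, g s) ∂ν := by
    rw [← integral_indicator hA]
    rw [integral_prod _ (hFub.indicator hA)]
    apply setIntegral_congr_fun measurableSet_Ioc
    intro t ht
    have hslice : ∀ s : ℝ, Set.indicator {p : ℝ × ℝ | p.2 < p.1}
        (fun p : ℝ × ℝ => f p.1 * g p.2) (t, s)
        = Set.indicator (Set.Iio t) (fun s => f t * g s) s := by
      intro s
      by_cases h : s < t
      · rw [Set.indicator_of_mem (by exact h) , Set.indicator_of_mem (by exact h)]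
      · rw [Set.indicator_of_notMem (by exact h), Set.indicator_of_notMem (by exact h)]
    simp_rw [hslice]
    rw [integral_indicator measurableSet_Iio]
    rw [hμ2, Measure.restrict_restrict measurableSet_Iio]
    have hset : Set.Iio t ∩ Set.Ioc (0:ℝ) 1 = Set.Ioo 0 t := by
      ext s
      simp only [Set.mem_inter_iff, Set.mem_Iio, Set.mem_Ioc, Set.mem_Ioo]
      constructor
      · rintro ⟨h1, h2, h3⟩; exact ⟨h2, h1⟩
      · rintro ⟨h1, h2⟩; exact ⟨h2, h1, le_trans (le_of_lt h2) ht.2⟩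
    rw [hset, ← integral_Ioc_eq_integral_Ioo, integral_const_mul]
  -- part 2 : over {t ≤ s}
  have hpart2 : (∫ p in {p : ℝ × ℝ | p.2 < p.1}ᶜ, f p.1 * g p.2 ∂(μ1.prod μ2))
      = ∫ s in Set.Ioc (0:ℝ) 1, (∫ t in Set.Ioc (0:ℝ) s, f t ∂ν) * g s := by
    rw [← integral_indicator hA.compl]
    rw [integral_prod_symm _ ((hFub.indicator hA.compl))]
    apply setIntegral_congr_fun measurableSet_Ioc
    intro s hs
    have hslice : ∀ t : ℝ, Set.indicator ({p : ℝ × ℝ | p.2 < p.1}ᶜ)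
        (fun p : ℝ × ℝ => f p.1 * g p.2) (t, s)
        = Set.indicator (Set.Iic s) (fun t => f t * g s) t := by
      intro t
      by_cases h : t ≤ s
      · have hmem : (t,s) ∈ {p : ℝ × ℝ | p.2 < p.1}ᶜ := by
          simp only [Set.mem_compl_iff, Set.mem_setOf_eq, not_lt]; exact h
        rw [Set.indicator_of_mem hmem, Set.indicator_of_mem (by exact h)]
      · have hmem : (t,s) ∉ {p : ℝ × ℝ | p.2 < p.1}ᶜ := by
          simp only [Set.mem_compl_iff, Set.mem_setOf_eq, not_lt, not_le]
          exact not_le.1 h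
        rw [Set.indicator_of_notMem hmem, Set.indicator_of_notMem (by exact h)]
    simp_rw [hslice]
    rw [integral_indicator measurableSet_Iic]
    rw [hμ1, Measure.restrict_restrict measurableSet_Iic]
    have hset : Set.Iic s ∩ Set.Ioc (0:ℝ) 1 = Set.Ioc 0 s := by
      ext t
      simp only [Set.mem_inter_iff, Set.mem_Iic, Set.mem_Ioc]
      constructor
      · rintro ⟨h1, h2, h3⟩; exact ⟨h2, h1⟩
      · rintro ⟨h1, h2⟩; exact ⟨h2, h1, le_trans h2 hs.2⟩
    rw [hset, integral_mul_const]
  rw [hpart1, hpart2] at hsplit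
  exact hsplit.trans hRHS

noncomputable def ce (n : ℕ) : ℝ := pIter ν (2*n) 1
noncomputable def se (n : ℕ) : ℝ := pIter ν (2*n+1) 1
noncomputable def mm (i j : ℕ) : ℝ :=
  ∫ t in Set.Ioc (0:ℝ) 1, pIter ν (2*i) t * pIter ν (2*j) t ∂ν
noncomputable def ll (i j : ℕ) : ℝ :=
  ∫ t in Set.Ioc (0:ℝ) 1, pIter ν (2*i+1) t * pIter ν (2*j+1) t

lemma mm_symm (i j : ℕ) : mm ν i j = mm ν j i := by
  unfold mm; congr 1; funext t; ring

lemma ll_symm (i j : ℕ) : ll ν i j = ll ν j i := by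
  unfold ll; congr 1; funext t; ring

lemma rel1 (i j : ℕ) : mm ν i (j+1) + ll ν i j = se ν i * ce ν (j+1) := by
  have h := ibp ν (pIter_mono ν (2*i)) (pIter_mono ν (2*j+1))
    (pIter_nonneg ν _) (pIter_nonneg ν _)
  have e1 : ∀ t : ℝ, (∫ s in Set.Ioc (0:ℝ) t, pIter ν (2*j+1) s) = pIter ν (2*j+2) t :=
    fun t => (pIter_even ν j t).symm
  have e2 : ∀ s : ℝ, (∫ t in Set.Ioc (0:ℝ) s, pIter ν (2*i) t ∂ν) = pIter ν (2*i+1) s :=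
    fun s => (pIter_odd ν i s).symm
  simp_rw [e1, e2] at h
  have h21 : 2*(j+1) = 2*j+2 := by ring
  have h22 : 2*(i+1) = 2*i+2 := by ring
  rw [mm, ll, se, ce, h21]
  exact h

lemma mrec (i j : ℕ) :
    mm ν (i+1) j = se ν j * ce ν (i+1) - se ν i * ce ν (j+1) + mm ν i (j+1) := by
  have h1 := rel1 ν j i
  have h2 := rel1 ν i j
  have hs1 : mm ν j (i+1) = mm ν (i+1) j := mm_symm ν j (i+1)
  have hs2 : ll ν j i = ll ν i j := ll_symm ν j i
  linarith

lemma m_zero (j : ℕ) : mm ν 0 j = se ν j := by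
  have h0 : mm ν 0 j = ∫ t in Set.Ioc (0:ℝ) 1, pIter ν (2*j) t ∂ν := by
    rw [mm]
    norm_num [pIter_zero]
  rw [h0, se, pIter_odd]

lemma diag (n : ℕ) : ∀ i, i ≤ n → mm ν i (n-i) =
    se ν n + ∑ k ∈ Finset.range i, (ce ν (k+1) * se ν (n-k-1) - se ν k * ce ν (n-k)) := by
  intro i
  induction i with
  | zero => intro _; simp [m_zero]
  | succ i ih =>
    intro hi
    have hi' : i ≤ n := le_trans (Nat.le_succ i) hi
    have h1 : n - (i+1) + 1 = n - i := by omega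
    have h2 : n - (i+1) = n - i - 1 := by omega
    rw [mrec, h1, h2, ih hi', Finset.sum_range_succ]
    ring

lemma dsum (d : ℕ → ℝ) (m : ℕ) :
    ∑ i ∈ Finset.range m, ∑ k ∈ Finset.range i, d k
      = ∑ k ∈ Finset.range m, ((m:ℝ) - 1 - k) * d k := by
  induction m with
  | zero => simp
  | succ m ih =>
    rw [Finset.sum_range_succ, ih, Finset.sum_range_succ]
    have hz : ((m+1:ℕ):ℝ) - 1 - (m:ℝ) = 0 := by push_cast; ring
    rw [hz, zero_mul, add_zero, ← Finset.sum_add_distrib]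
    apply Finset.sum_congr rfl
    intro k _
    push_cast
    ring

lemma Mn_eq (n : ℕ) : ∑ i ∈ Finset.range (n+1), mm ν i (n-i)
    = ∑ i ∈ Finset.range (n+1), ((n:ℝ) + 1 - 2*i) * (ce ν i * se ν (n-i)) := by
  have hdiag : ∀ i ∈ Finset.range (n+1), mm ν i (n-i)
      = se ν n + ∑ k ∈ Finset.range i,
        (ce ν (k+1) * se ν (n-k-1) - se ν k * ce ν (n-k)) := by
    intro i hi
    exact diag ν n i (Nat.lt_succ_iff.1 (Finset.mem_range.1 hi))
  rw [Finset.sum_congr rfl hdiag, Finset.sum_add_distrib, Finset.sum_const,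
    Finset.card_range, dsum]
  -- now : (n+1) • se n + Σ_{k<n+1} ((n+1)-1-k) * (ce(k+1) se(n-k-1) - se k ce(n-k)) = RHS
  have hsplit : ∀ k ∈ Finset.range (n+1),
      (((n+1:ℕ):ℝ) - 1 - k) * (ce ν (k+1) * se ν (n-k-1) - se ν k * ce ν (n-k))
      = ((n:ℝ) - k) * (ce ν (k+1) * se ν (n-k-1)) - ((n:ℝ) - k) * (se ν k * ce ν (n-k)) := by
    intro k _
    push_cast
    ring
  rw [Finset.sum_congr rfl hsplit, Finset.sum_sub_distrib]
  -- first sum : reindex k → k+1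
  have hce0 : ce ν 0 = 1 := by rw [ce]; exact pIter_zero ν 1
  have hfirst : ∑ k ∈ Finset.range (n+1), ((n:ℝ) - k) * (ce ν (k+1) * se ν (n-k-1))
      = ∑ i ∈ Finset.range (n+1), ((n:ℝ) + 1 - i) * (ce ν i * se ν (n-i)) - ((n:ℝ)+1) * se ν n := by
    rw [Finset.sum_range_succ,
      Finset.sum_range_succ' (fun i => ((n:ℝ) + 1 - (i:ℝ)) * (ce ν i * se ν (n-i))) n]
    have hz : ((n:ℝ) - (n:ℝ)) * (ce ν (n+1) * se ν (n-n-1)) = 0 := by ring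
    rw [hz, add_zero]
    have hterm : ∀ k ∈ Finset.range n,
        ((n:ℝ) + 1 - ((k+1:ℕ):ℝ)) * (ce ν (k+1) * se ν (n-(k+1)))
        = ((n:ℝ) - k) * (ce ν (k+1) * se ν (n-k-1)) := by
      intro k _
      have hidx : n - (k+1) = n - k - 1 := by omega
      rw [hidx]
      push_cast
      ring
    rw [Finset.sum_congr rfl hterm]
    have hf0 : ((n:ℝ) + 1 - ((0:ℕ):ℝ)) * (ce ν 0 * se ν (n-0)) = ((n:ℝ)+1) * se ν n := by
      rw [hce0, Nat.sub_zero]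
      push_cast
      ring
    rw [hf0]
    ring
  -- second sum : reflect
  have hsecond : ∑ k ∈ Finset.range (n+1), ((n:ℝ) - k) * (se ν k * ce ν (n-k))
      = ∑ i ∈ Finset.range (n+1), (i:ℝ) * (ce ν i * se ν (n-i)) := by
    rw [← Finset.sum_range_reflect]
    apply Finset.sum_congr rfl
    intro i hi
    have hin : i ≤ n := Nat.lt_succ_iff.1 (Finset.mem_range.1 hi)
    have h1 : n + 1 - 1 - i = n - i := by omega
    have h2 : n - (n - i) = i := by omega
    rw [h1, h2]
    have hc : ((n - i : ℕ):ℝ) = (n:ℝ) - i := by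
      rw [Nat.cast_sub hin]
    rw [hc]
    ring
  have hcomb : ∑ i ∈ Finset.range (n+1), ((n:ℝ) + 1 - i) * (ce ν i * se ν (n-i))
      - ∑ i ∈ Finset.range (n+1), (i:ℝ) * (ce ν i * se ν (n-i))
      = ∑ i ∈ Finset.range (n+1), ((n:ℝ) + 1 - 2*i) * (ce ν i * se ν (n-i)) := by
    rw [← Finset.sum_sub_distrib]
    apply Finset.sum_congr rfl
    intro i _
    ring
  rw [hfirst, hsecond, nsmul_eq_mul]
  push_cast
  linarith [hcomb]

lemma keyId (n : ℕ) :
    ∑ i ∈ Finset.range (n+1), (2*((n:ℝ)-i)+2) * (ce ν i * se ν (n-i))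
      - ∑ i ∈ Finset.range (n+1), (2*(i:ℝ)) * (ce ν i * se ν (n-i))
      = 2 * ∑ i ∈ Finset.range (n+1), mm ν i (n-i) := by
  rw [Mn_eq, ← Finset.sum_sub_distrib, Finset.mul_sum]
  apply Finset.sum_congr rfl
  intro i _
  ring

lemma pIter_even_le (i : ℕ) {t : ℝ} (ht : t ∈ Set.Icc (0:ℝ) 1) :
    pIter ν (2*i) t ≤ 1 / i.factorial := by
  refine le_trans (pIter_bound ν i t ht).1 ?_
  have h1 : t^i ≤ 1 := pow_le_one₀ ht.1 ht.2
  have hf : (0:ℝ) ≤ i.factorial := Nat.cast_nonneg _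
  exact div_le_div_of_nonneg_right h1 hf

lemma pIter_odd_le (i : ℕ) {t : ℝ} (ht : t ∈ Set.Icc (0:ℝ) 1) :
    pIter ν (2*i+1) t ≤ 1 / i.factorial := by
  refine le_trans (pIter_bound ν i t ht).2 ?_
  have h1 : t^i ≤ 1 := pow_le_one₀ ht.1 ht.2
  have hf : (0:ℝ) ≤ i.factorial := Nat.cast_nonneg _
  exact div_le_div_of_nonneg_right h1 hf

lemma se_nonneg (n : ℕ) : 0 ≤ se ν n := pIter_nonneg ν _ 1
lemma ce_nonneg (n : ℕ) : 0 ≤ ce ν n := pIter_nonneg ν _ 1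

lemma se_le (n : ℕ) : se ν n ≤ 1 / n.factorial :=
  pIter_odd_le ν n (Set.mem_Icc.2 ⟨zero_le_one, le_refl 1⟩)

lemma ce_le (n : ℕ) : ce ν n ≤ 1 / n.factorial :=
  pIter_even_le ν n (Set.mem_Icc.2 ⟨zero_le_one, le_refl 1⟩)

lemma prod_intOn (i j : ℕ) (μ' : Measure ℝ) [IsLocallyFiniteMeasure μ'] (a b : ℕ) :
    IntegrableOn (fun t => pIter ν a t * pIter ν b t) (Set.Ioc 0 1) μ' := by
  have hm : Measurable (fun t => pIter ν a t * pIter ν b t) :=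
    (pIter_mono ν a).measurable.mul (pIter_mono ν b).measurable
  have hfin : IsFiniteMeasure (μ'.restrict (Set.Ioc (0:ℝ) 1)) := by
    constructor
    rw [Measure.restrict_apply_univ]
    exact lt_of_le_of_lt (measure_mono Set.Ioc_subset_Icc_self)
      isCompact_Icc.measure_lt_top
  apply Integrable.mono' (g := fun _ => pIter ν a 1 * pIter ν b 1)
    (integrable_const _) hm.aestronglyMeasurable
  filter_upwards [ae_restrict_mem measurableSet_Ioc] with t ht
  rw [Real.norm_eq_abs, abs_of_nonneg (mul_nonneg (pIter_nonneg ν a t) (pIter_nonneg ν b t))]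
  exact mul_le_mul ((pIter_mono ν a) ht.2) ((pIter_mono ν b) ht.2)
    (pIter_nonneg ν b t) (pIter_nonneg ν a 1)

lemma mm_nonneg (i j : ℕ) : 0 ≤ mm ν i j :=
  integral_nonneg fun t => mul_nonneg (pIter_nonneg ν _ t) (pIter_nonneg ν _ t)

lemma mm_le (i j : ℕ) : mm ν i j ≤ 1 / (i.factorial * j.factorial) := by
  rw [mm]
  have hb : ∀ t ∈ Set.Ioc (0:ℝ) 1, pIter ν (2*i) t * pIter ν (2*j) t
      ≤ 1 / (i.factorial * j.factorial) := by
    intro t ht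
    have ht' : t ∈ Set.Icc (0:ℝ) 1 := ⟨le_of_lt ht.1, ht.2⟩
    have h1 := pIter_even_le ν i ht'
    have h2 := pIter_even_le ν j ht'
    have := mul_le_mul h1 h2 (pIter_nonneg ν _ t) (by positivity)
    calc pIter ν (2*i) t * pIter ν (2*j) t ≤ 1 / i.factorial * (1 / j.factorial) := this
      _ = 1 / (i.factorial * j.factorial) := by
          rw [div_mul_div_comm, one_mul]
  have hint := prod_intOn ν i j ν (2*i) (2*j)
  have hle := setIntegral_mono_on hint (integrableOn_const (measure_lt_top _ _).ne)
    measurableSet_Ioc hb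
  refine le_trans hle ?_
  rw [setIntegral_const, smul_eq_mul]
  have h1 := measure_Ioc_toReal_le_one ν 1
  have h2 : (0:ℝ) ≤ 1 / (i.factorial * j.factorial) := by positivity
  have h1' : ν.real (Set.Ioc (0:ℝ) 1) ≤ 1 := h1
  nlinarith [mul_le_mul_of_nonneg_right h1' h2]

lemma sum_invfac (n : ℕ) :
    ∑ i ∈ Finset.range (n+1), (1:ℝ)/(i.factorial * (n-i).factorial) = 2^n / n.factorial := by
  have h : ∀ i ∈ Finset.range (n+1),
      (1:ℝ)/(i.factorial * (n-i).factorial) = (n.choose i : ℝ) / n.factorial := by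
    intro i hi
    have hin : i ≤ n := Nat.lt_succ_iff.1 (Finset.mem_range.1 hi)
    have hch := Nat.choose_mul_factorial_mul_factorial hin
    have hcast : (n.choose i : ℝ) * (i.factorial : ℝ) * ((n-i).factorial : ℝ)
        = (n.factorial : ℝ) := by exact_mod_cast congrArg (Nat.cast (R := ℝ)) hch
    have hif : (0:ℝ) < (i.factorial : ℝ) := by exact_mod_cast Nat.factorial_pos i
    have hnif : (0:ℝ) < ((n-i).factorial : ℝ) := by exact_mod_cast Nat.factorial_pos (n-i)
    have hnf : (0:ℝ) < (n.factorial : ℝ) := by exact_mod_cast Nat.factorial_pos n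
    field_simp
    linarith [hcast]
  rw [Finset.sum_congr rfl h, ← Finset.sum_div]
  congr 1
  rw [← Nat.cast_sum]
  exact_mod_cast congrArg (Nat.cast (R := ℝ)) (Nat.sum_range_choose n)

lemma Mn_le (n : ℕ) : |∑ i ∈ Finset.range (n+1), mm ν i (n-i)| ≤ 2^n / n.factorial := by
  rw [abs_of_nonneg (Finset.sum_nonneg fun i _ => mm_nonneg ν i (n-i))]
  calc ∑ i ∈ Finset.range (n+1), mm ν i (n-i)
      ≤ ∑ i ∈ Finset.range (n+1), (1:ℝ)/(i.factorial * (n-i).factorial) :=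
        Finset.sum_le_sum fun i _ => mm_le ν i (n-i)
    _ = 2^n / n.factorial := sum_invfac n

lemma summable_abs_master {f : ℕ → ℝ} {C r : ℝ}
    (h : ∀ n, |f n| ≤ C * r^n / n.factorial) : Summable (fun n => |f n|) := by
  apply Summable.of_nonneg_of_le (fun n => abs_nonneg _) h
  have := (Real.summable_pow_div_factorial r).mul_left C
  simpa [mul_div_assoc] using this

lemma summable_master {f : ℕ → ℝ} {C r : ℝ}
    (h : ∀ n, |f n| ≤ C * r^n / n.factorial) : Summable f :=
  (summable_abs_master h).of_abs

lemma coef_le (n : ℕ) : 2*(n:ℝ)+2 ≤ 4 * 2^n := by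
  have h : (n:ℝ) + 1 ≤ 2^n := by exact_mod_cast (Nat.lt_two_pow_self (n := n))
  nlinarith [h]

/-! ### Series -/

noncomputable def aF (z : ℝ) (n : ℕ) : ℝ := (-1)^n * z^(2*n+1) * se ν n
noncomputable def bF (z : ℝ) (n : ℕ) : ℝ := (-1)^n * z^(2*n) * ce ν n
noncomputable def dF (z : ℝ) (n : ℕ) : ℝ := (-1)^n * ((2*(n:ℝ)+1) * z^(2*n)) * se ν n
noncomputable def eF (z : ℝ) (n : ℕ) : ℝ := (-1)^n * ((2*(n:ℝ)+2) * z^(2*n+1)) * se ν n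
noncomputable def kF (z : ℝ) (n : ℕ) : ℝ := (-1)^n * ((2*(n:ℝ)) * z^(2*n)) * ce ν n
noncomputable def MnD (n : ℕ) : ℝ := ∑ i ∈ Finset.range (n+1), mm ν i (n-i)
noncomputable def vF (z : ℝ) (n : ℕ) : ℝ := (-1)^n * z^(2*n) * MnD ν n

lemma abs_pow_two_mul (z : ℝ) (n : ℕ) : |z^(2*n)| = (z^2)^n := by
  rw [abs_pow, pow_mul, sq_abs]

lemma abs_pow_two_mul_succ (z : ℝ) (n : ℕ) : |z^(2*n+1)| = |z| * (z^2)^n := by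
  rw [abs_pow, pow_succ, pow_mul, sq_abs, mul_comm]

lemma pow_two_le (z : ℝ) (n : ℕ) : (z^2)^n ≤ (2*z^2)^n :=
  pow_le_pow_left₀ (sq_nonneg z) (by nlinarith [sq_nonneg z]) n

lemma coef_le' (n : ℕ) : 2*(n:ℝ)+1 ≤ 4 * 2^n := le_trans (by linarith) (coef_le n)
lemma coef_le'' (n : ℕ) : 2*(n:ℝ) ≤ 4 * 2^n := le_trans (by linarith) (coef_le n)

lemma abs_aF_le (z : ℝ) (n : ℕ) : |aF ν z n| ≤ |z| * (z^2)^n / n.factorial := by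
  rw [aF, abs_mul, abs_mul, abs_pow, abs_neg, abs_one, one_pow, one_mul,
    abs_pow_two_mul_succ, abs_of_nonneg (se_nonneg ν n)]
  calc |z| * (z^2)^n * se ν n ≤ |z| * (z^2)^n * (1/n.factorial) :=
        mul_le_mul_of_nonneg_left (se_le ν n) (by positivity)
    _ = |z| * (z^2)^n / n.factorial := by ring

lemma abs_aF_le' (z : ℝ) (n : ℕ) : |aF ν z n| ≤ |z| * (2*z^2)^n / n.factorial := by
  refine le_trans (abs_aF_le ν z n) ?_
  apply div_le_div_of_nonneg_right ?_ (Nat.cast_nonneg _)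
  exact mul_le_mul_of_nonneg_left (pow_two_le z n) (abs_nonneg z)

lemma abs_bF_le (z : ℝ) (n : ℕ) : |bF ν z n| ≤ 1 * (z^2)^n / n.factorial := by
  rw [bF, abs_mul, abs_mul, abs_pow, abs_neg, abs_one, one_pow, one_mul,
    abs_pow_two_mul, abs_of_nonneg (ce_nonneg ν n), one_mul]
  calc (z^2)^n * ce ν n ≤ (z^2)^n * (1/n.factorial) :=
        mul_le_mul_of_nonneg_left (ce_le ν n) (by positivity)
    _ = (z^2)^n / n.factorial := by ring

lemma abs_bF_le' (z : ℝ) (n : ℕ) : |bF ν z n| ≤ 1 * (2*z^2)^n / n.factorial := by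
  refine le_trans (abs_bF_le ν z n) ?_
  apply div_le_div_of_nonneg_right ?_ (Nat.cast_nonneg _)
  rw [one_mul, one_mul]
  exact pow_two_le z n

lemma abs_dF_le (z : ℝ) (n : ℕ) : |dF ν z n| ≤ 4 * (2*z^2)^n / n.factorial := by
  rw [dF, abs_mul, abs_mul, abs_pow, abs_neg, abs_one, one_pow, one_mul, abs_mul,
    abs_pow_two_mul, abs_of_nonneg (se_nonneg ν n),
    abs_of_nonneg (by positivity : (0:ℝ) ≤ 2*(n:ℝ)+1)]
  have h1 : (2*(n:ℝ)+1) * (z^2)^n * se ν n ≤ (4*2^n) * (z^2)^n * (1/n.factorial) := by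
    apply mul_le_mul (mul_le_mul (coef_le' n) le_rfl (by positivity) (by positivity))
      (se_le ν n) (se_nonneg ν n) (by positivity)
  calc (2*(n:ℝ)+1) * (z^2)^n * se ν n ≤ (4*2^n) * (z^2)^n * (1/n.factorial) := h1
    _ = 4 * (2*z^2)^n / n.factorial := by rw [mul_pow]; ring

lemma abs_eF_le (z : ℝ) (n : ℕ) : |eF ν z n| ≤ (4*|z|) * (2*z^2)^n / n.factorial := by
  rw [eF, abs_mul, abs_mul, abs_pow, abs_neg, abs_one, one_pow, one_mul, abs_mul,
    abs_pow_two_mul_succ, abs_of_nonneg (se_nonneg ν n),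
    abs_of_nonneg (by positivity : (0:ℝ) ≤ 2*(n:ℝ)+2)]
  have h1 : (2*(n:ℝ)+2) * (|z| * (z^2)^n) * se ν n
      ≤ (4*2^n) * (|z| * (z^2)^n) * (1/n.factorial) := by
    apply mul_le_mul (mul_le_mul (coef_le n) le_rfl (by positivity) (by positivity))
      (se_le ν n) (se_nonneg ν n) (by positivity)
  calc (2*(n:ℝ)+2) * (|z| * (z^2)^n) * se ν n
      ≤ (4*2^n) * (|z| * (z^2)^n) * (1/n.factorial) := h1
    _ = (4*|z|) * (2*z^2)^n / n.factorial := by rw [mul_pow]; ring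

lemma abs_kF_le (z : ℝ) (n : ℕ) : |kF ν z n| ≤ 4 * (2*z^2)^n / n.factorial := by
  rw [kF, abs_mul, abs_mul, abs_pow, abs_neg, abs_one, one_pow, one_mul, abs_mul,
    abs_pow_two_mul, abs_of_nonneg (ce_nonneg ν n),
    abs_of_nonneg (by positivity : (0:ℝ) ≤ 2*(n:ℝ))]
  have h1 : (2*(n:ℝ)) * (z^2)^n * ce ν n ≤ (4*2^n) * (z^2)^n * (1/n.factorial) := by
    apply mul_le_mul (mul_le_mul (coef_le'' n) le_rfl (by positivity) (by positivity))
      (ce_le ν n) (ce_nonneg ν n) (by positivity)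
  calc (2*(n:ℝ)) * (z^2)^n * ce ν n ≤ (4*2^n) * (z^2)^n * (1/n.factorial) := h1
    _ = 4 * (2*z^2)^n / n.factorial := by rw [mul_pow]; ring

lemma abs_vF_le (z : ℝ) (n : ℕ) : |vF ν z n| ≤ 1 * (2*z^2)^n / n.factorial := by
  rw [vF, abs_mul, abs_mul, abs_pow, abs_neg, abs_one, one_pow, one_mul,
    abs_pow_two_mul, one_mul]
  have h2 := Mn_le ν n
  calc (z^2)^n * |MnD ν n| ≤ (z^2)^n * (2^n/n.factorial) :=
        mul_le_mul_of_nonneg_left h2 (by positivity)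
    _ = (2*z^2)^n / n.factorial := by rw [mul_pow]; ring

lemma summable_abs_aF (z : ℝ) : Summable (fun n => |aF ν z n|) :=
  summable_abs_master (abs_aF_le' ν z)
lemma summable_abs_bF (z : ℝ) : Summable (fun n => |bF ν z n|) :=
  summable_abs_master (abs_bF_le' ν z)
lemma summable_abs_dF (z : ℝ) : Summable (fun n => |dF ν z n|) :=
  summable_abs_master (abs_dF_le ν z)
lemma summable_abs_eF (z : ℝ) : Summable (fun n => |eF ν z n|) :=
  summable_abs_master (abs_eF_le ν z)
lemma summable_abs_kF (z : ℝ) : Summable (fun n => |kF ν z n|) :=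
  summable_abs_master (abs_kF_le ν z)
lemma summable_vF (z : ℝ) : Summable (fun n => vF ν z n) :=
  summable_master (abs_vF_le ν z)

lemma crossId (z : ℝ) (n : ℕ) :
    (∑ p ∈ Finset.HasAntidiagonal.antidiagonal n, bF ν z p.1 * eF ν z p.2)
      - (∑ p ∈ Finset.HasAntidiagonal.antidiagonal n, kF ν z p.1 * aF ν z p.2)
      = 2 * z * vF ν z n := by
  rw [Finset.Nat.sum_antidiagonal_eq_sum_range_succ_mk,
      Finset.Nat.sum_antidiagonal_eq_sum_range_succ_mk]
  have hb : ∀ i ∈ Finset.range (n+1), bF ν z i * eF ν z (n-i)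
      = ((-1:ℝ)^n * z^(2*n+1)) * ((2*((n:ℝ)-i)+2) * (ce ν i * se ν (n-i))) := by
    intro i hi
    have hin : i ≤ n := Nat.lt_succ_iff.1 (Finset.mem_range.1 hi)
    have h1 : (-1:ℝ)^i * (-1:ℝ)^(n-i) = (-1:ℝ)^n := by
      rw [← pow_add]; congr 1; omega
    have h2 : z^(2*i) * z^(2*(n-i)+1) = z^(2*n+1) := by
      rw [← pow_add]; congr 1; omega
    have h3 : ((n-i:ℕ):ℝ) = (n:ℝ) - i := Nat.cast_sub hin
    rw [bF, eF, h3]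
    calc (-1:ℝ)^i * z^(2*i) * ce ν i * ((-1)^(n-i) * ((2*((n:ℝ)-i)+2) * z^(2*(n-i)+1)) * se ν (n-i))
        = ((-1:ℝ)^i * (-1:ℝ)^(n-i)) * (z^(2*i) * z^(2*(n-i)+1))
            * ((2*((n:ℝ)-i)+2) * (ce ν i * se ν (n-i))) := by ring
      _ = ((-1:ℝ)^n * z^(2*n+1)) * ((2*((n:ℝ)-i)+2) * (ce ν i * se ν (n-i))) := by
          rw [h1, h2]
  have hk : ∀ i ∈ Finset.range (n+1), kF ν z i * aF ν z (n-i)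
      = ((-1:ℝ)^n * z^(2*n+1)) * ((2*(i:ℝ)) * (ce ν i * se ν (n-i))) := by
    intro i hi
    have hin : i ≤ n := Nat.lt_succ_iff.1 (Finset.mem_range.1 hi)
    have h1 : (-1:ℝ)^i * (-1:ℝ)^(n-i) = (-1:ℝ)^n := by
      rw [← pow_add]; congr 1; omega
    have h2 : z^(2*i) * z^(2*(n-i)+1) = z^(2*n+1) := by
      rw [← pow_add]; congr 1; omega
    rw [kF, aF]
    calc (-1:ℝ)^i * (2*(i:ℝ) * z^(2*i)) * ce ν i * ((-1)^(n-i) * z^(2*(n-i)+1) * se ν (n-i))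
        = ((-1:ℝ)^i * (-1:ℝ)^(n-i)) * (z^(2*i) * z^(2*(n-i)+1))
            * ((2*(i:ℝ)) * (ce ν i * se ν (n-i))) := by ring
      _ = ((-1:ℝ)^n * z^(2*n+1)) * ((2*(i:ℝ)) * (ce ν i * se ν (n-i))) := by
          rw [h1, h2]
  rw [Finset.sum_congr rfl hb, Finset.sum_congr rfl hk, ← Finset.mul_sum, ← Finset.mul_sum,
    ← mul_sub, keyId]
  rw [vF, MnD]
  have hzz : z^(2*n+1) = z^(2*n) * z := pow_succ z (2*n)
  rw [hzz]
  ring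

lemma sinpF_eq_tsum_aF (z : ℝ) : sinpF ν z = ∑' n, aF ν z n := rfl
lemma cospF_eq_tsum_bF (z : ℝ) : cospF ν z = ∑' n, bF ν z n := rfl

lemma seriesId (z : ℝ) :
    cospF ν z * (∑' n, eF ν z n) - sinpF ν z * (∑' n, kF ν z n)
      = 2 * z * ∑' n, vF ν z n := by
  have hB : Summable fun n => ‖bF ν z n‖ := by
    simpa [Real.norm_eq_abs] using summable_abs_bF ν z
  have hE : Summable fun n => ‖eF ν z n‖ := by
    simpa [Real.norm_eq_abs] using summable_abs_eF ν z
  have hK : Summable fun n => ‖kF ν z n‖ := by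
    simpa [Real.norm_eq_abs] using summable_abs_kF ν z
  have hA : Summable fun n => ‖aF ν z n‖ := by
    simpa [Real.norm_eq_abs] using summable_abs_aF ν z
  rw [cospF_eq_tsum_bF, sinpF_eq_tsum_aF]
  rw [tsum_mul_tsum_eq_tsum_sum_antidiagonal_of_summable_norm hB hE,
      tsum_mul_tsum_eq_tsum_sum_antidiagonal_of_summable_norm hA hK]
  have hsw : ∀ n : ℕ, ∑ p ∈ Finset.HasAntidiagonal.antidiagonal n, aF ν z p.1 * kF ν z p.2
      = ∑ p ∈ Finset.HasAntidiagonal.antidiagonal n, kF ν z p.1 * aF ν z p.2 := by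
    intro n
    rw [← Finset.Nat.sum_antidiagonal_swap]
    apply Finset.sum_congr rfl
    intro p _
    simp only [Prod.fst_swap, Prod.snd_swap]
    exact mul_comm _ _
  rw [tsum_congr hsw]
  rw [← Summable.tsum_sub ((summable_norm_sum_mul_antidiagonal_of_summable_norm hB hE).of_norm)
    ?_]
  · rw [tsum_congr (crossId ν z), tsum_mul_left]
  · have := (summable_norm_sum_mul_antidiagonal_of_summable_norm hK hA).of_norm
    exact this

lemma E_eq (z : ℝ) : ∑' n, eF ν z n = sinpF ν z + z * ∑' n, dF ν z n := by
  have h1 : ∀ n, eF ν z n = aF ν z n + z * dF ν z n := by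
    intro n
    rw [eF, aF, dF]
    have hzz : z^(2*n+1) = z^(2*n) * z := pow_succ z (2*n)
    rw [hzz]
    ring
  rw [tsum_congr h1, Summable.tsum_add ((summable_abs_aF ν z).of_abs)
    (((summable_abs_dF ν z).of_abs).mul_left z), tsum_mul_left, sinpF_eq_tsum_aF]

lemma hasDerivAt_sinpF (z : ℝ) : HasDerivAt (sinpF ν) (∑' n, dF ν z n) z := by
  set R : ℝ := |z| + 1 with hR
  have hzball : z ∈ Metric.ball (0:ℝ) R := by
    simp only [Metric.mem_ball, dist_zero_right, Real.norm_eq_abs, hR]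
    linarith [abs_nonneg z]
  have hball : IsOpen (Metric.ball (0:ℝ) R) := Metric.isOpen_ball
  have hconn : IsPreconnected (Metric.ball (0:ℝ) R) := (convex_ball _ _).isPreconnected
  have hu : Summable (fun n : ℕ => 4 * (2*R^2)^n / n.factorial) := by
    have := (Real.summable_pow_div_factorial (2*R^2)).mul_left 4
    simpa [mul_div_assoc] using this
  have hg : ∀ (n : ℕ) (y : ℝ), y ∈ Metric.ball (0:ℝ) R →
      HasDerivAt (fun y => aF ν y n) (dF ν y n) y := by
    intro n y _
    have h := ((hasDerivAt_pow (2*n+1) y).const_mul ((-1:ℝ)^n)).mul_const (se ν n)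
    have hexp : 2*n+1-1 = 2*n := by omega
    rw [hexp] at h
    have h2 : HasDerivAt (fun w => aF ν w n)
        ((-1:ℝ)^n * (((2*n+1:ℕ):ℝ) * y^(2*n)) * se ν n) y := h
    convert h2 using 1
    rw [dF]; push_cast; ring
  have hg' : ∀ (n : ℕ) (y : ℝ), y ∈ Metric.ball (0:ℝ) R →
      ‖dF ν y n‖ ≤ 4 * (2*R^2)^n / n.factorial := by
    intro n y hy
    have hyR : |y| ≤ R := by
      simp only [Metric.mem_ball, dist_zero_right, Real.norm_eq_abs] at hy
      linarith
    have h1 := abs_dF_le ν y n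
    rw [Real.norm_eq_abs]
    refine le_trans h1 ?_
    apply div_le_div_of_nonneg_right ?_ (Nat.cast_nonneg _)
    apply mul_le_mul_of_nonneg_left ?_ (by norm_num)
    have hR0 : (0:ℝ) ≤ R := by rw [hR]; positivity
    have hyR2 : y^2 ≤ R^2 := by
      rw [← sq_abs y]
      nlinarith [abs_nonneg y]
    apply pow_le_pow_left₀ (by positivity)
    linarith
  have h0 : Summable fun n => aF ν z n := (summable_abs_aF ν z).of_abs
  have := hasDerivAt_tsum_of_isPreconnected hu hball hconn hg hg' hzball h0 hzball
  have hfun : (fun y => ∑' n, aF ν y n) = sinpF ν := by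
    funext y; rfl
  rw [hfun] at this
  exact this

/-! ### cp squared and interchange lemmas -/

noncomputable def cTerm (z : ℝ) (n : ℕ) (t : ℝ) : ℝ := (-1)^n * z^(2*n) * pIter ν (2*n) t

lemma cpF_eq_tsum (z t : ℝ) : cpF ν z t = ∑' n, cTerm ν z n t := rfl

lemma cTerm_measurable (z : ℝ) (n : ℕ) : Measurable (cTerm ν z n) :=
  ((pIter_mono ν (2*n)).measurable).const_mul _

lemma abs_cTerm_le (z : ℝ) (n : ℕ) {t : ℝ} (ht : t ∈ Set.Icc (0:ℝ) 1) :
    |cTerm ν z n t| ≤ (z^2)^n / n.factorial := by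
  rw [cTerm, abs_mul, abs_mul, abs_pow, abs_neg, abs_one, one_pow, one_mul,
    abs_pow_two_mul, abs_of_nonneg (pIter_nonneg ν _ t)]
  calc (z^2)^n * pIter ν (2*n) t ≤ (z^2)^n * (1/n.factorial) :=
        mul_le_mul_of_nonneg_left (pIter_even_le ν n ht) (by positivity)
    _ = (z^2)^n / n.factorial := by ring

lemma summable_abs_cTerm (z : ℝ) {t : ℝ} (ht : t ∈ Set.Icc (0:ℝ) 1) :
    Summable (fun n => |cTerm ν z n t|) := by
  exact summable_abs_master (C := 1) (r := z^2)
    (fun n => by rw [one_mul]; exact abs_cTerm_le ν z n ht)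

noncomputable def wP (z : ℝ) (n : ℕ) (t : ℝ) : ℝ :=
  ∑ i ∈ Finset.range (n+1), ((-1:ℝ)^n * z^(2*n)) * (pIter ν (2*i) t * pIter ν (2*(n-i)) t)

lemma cp_sq (z : ℝ) {t : ℝ} (ht : t ∈ Set.Icc (0:ℝ) 1) :
    (cpF ν z t)^2 = ∑' n, wP ν z n t := by
  have hc : Summable fun n => ‖cTerm ν z n t‖ := by
    simpa [Real.norm_eq_abs] using summable_abs_cTerm ν z ht
  rw [pow_two, cpF_eq_tsum, tsum_mul_tsum_eq_tsum_sum_antidiagonal_of_summable_norm hc hc]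
  apply tsum_congr
  intro n
  rw [Finset.Nat.sum_antidiagonal_eq_sum_range_succ_mk, wP]
  apply Finset.sum_congr rfl
  intro i hi
  have hin : i ≤ n := Nat.lt_succ_iff.1 (Finset.mem_range.1 hi)
  have h1 : (-1:ℝ)^i * (-1:ℝ)^(n-i) = (-1:ℝ)^n := by
    rw [← pow_add]; congr 1; omega
  have h2 : z^(2*i) * z^(2*(n-i)) = z^(2*n) := by
    rw [← pow_add]; congr 1; omega
  rw [cTerm, cTerm]
  calc (-1:ℝ)^i * z^(2*i) * pIter ν (2*i) t * ((-1)^(n-i) * z^(2*(n-i)) * pIter ν (2*(n-i)) t)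
      = ((-1:ℝ)^i * (-1:ℝ)^(n-i)) * (z^(2*i) * z^(2*(n-i)))
          * (pIter ν (2*i) t * pIter ν (2*(n-i)) t) := by ring
    _ = (-1:ℝ)^n * z^(2*n) * (pIter ν (2*i) t * pIter ν (2*(n-i)) t) := by rw [h1, h2]

lemma wP_int (z : ℝ) (n : ℕ) : Integrable (wP ν z n) (ν.restrict (Set.Ioc 0 1)) := by
  apply integrable_finset_sum
  intro i _
  exact ((prod_intOn ν i (n-i) ν (2*i) (2*(n-i)))).const_mul _

lemma wP_bound (z : ℝ) (n : ℕ) {t : ℝ} (ht : t ∈ Set.Icc (0:ℝ) 1) :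
    |wP ν z n t| ≤ (2*z^2)^n / n.factorial := by
  refine le_trans (Finset.abs_sum_le_sum_abs _ _) ?_
  have hterm : ∀ i ∈ Finset.range (n+1),
      |((-1:ℝ)^n * z^(2*n)) * (pIter ν (2*i) t * pIter ν (2*(n-i)) t)|
      ≤ (z^2)^n * (1/(i.factorial * (n-i).factorial)) := by
    intro i hi
    rw [abs_mul, abs_mul, abs_mul, abs_pow, abs_neg, abs_one, one_pow, one_mul,
      abs_pow_two_mul, abs_of_nonneg (pIter_nonneg ν _ t), abs_of_nonneg (pIter_nonneg ν _ t)]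
    apply mul_le_mul_of_nonneg_left ?_ (by positivity)
    have h1 := pIter_even_le ν i ht
    have h2 := pIter_even_le ν (n-i) ht
    calc pIter ν (2*i) t * pIter ν (2*(n-i)) t
        ≤ 1/i.factorial * (1/(n-i).factorial) :=
          mul_le_mul h1 h2 (pIter_nonneg ν _ t) (by positivity)
      _ = 1/(i.factorial * (n-i).factorial) := by rw [div_mul_div_comm, one_mul]
  refine le_trans (Finset.sum_le_sum hterm) ?_
  rw [← Finset.mul_sum, sum_invfac]
  rw [mul_pow]
  rw [mul_div_assoc]
  apply le_of_eq
  ring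

lemma wP_integral (z : ℝ) (n : ℕ) :
    ∫ t in Set.Ioc (0:ℝ) 1, wP ν z n t ∂ν = vF ν z n := by
  have h1 : ∫ t in Set.Ioc (0:ℝ) 1, wP ν z n t ∂ν
      = ∑ i ∈ Finset.range (n+1), ∫ t in Set.Ioc (0:ℝ) 1,
          ((-1:ℝ)^n * z^(2*n)) * (pIter ν (2*i) t * pIter ν (2*(n-i)) t) ∂ν := by
    simp only [wP]
    apply integral_finset_sum
    intro i _
    exact ((prod_intOn ν i (n-i) ν (2*i) (2*(n-i)))).const_mul _
  rw [h1]
  have h2 : ∀ i ∈ Finset.range (n+1), (∫ t in Set.Ioc (0:ℝ) 1,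
      ((-1:ℝ)^n * z^(2*n)) * (pIter ν (2*i) t * pIter ν (2*(n-i)) t) ∂ν)
      = ((-1:ℝ)^n * z^(2*n)) * mm ν i (n-i) := by
    intro i _
    rw [integral_const_mul]
    rfl
  rw [Finset.sum_congr rfl h2, ← Finset.mul_sum, vF, MnD]

lemma SV_eq (z : ℝ) : ∑' n, vF ν z n = ∫ t in Set.Ioc (0:ℝ) 1, (cpF ν z t)^2 ∂ν := by
  have hInt : ∀ n, Integrable (wP ν z n) (ν.restrict (Set.Ioc 0 1)) := wP_int ν z
  have hSum : Summable fun n => ∫ t, ‖wP ν z n t‖ ∂(ν.restrict (Set.Ioc 0 1)) := by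
    have hone : ∀ n : ℕ, (∫ t, ‖wP ν z n t‖ ∂(ν.restrict (Set.Ioc 0 1)))
        ≤ (2*z^2)^n / n.factorial := by
      intro n
      have hle : ∀ t ∈ Set.Ioc (0:ℝ) 1, ‖wP ν z n t‖ ≤ (2*z^2)^n / n.factorial := by
        intro t ht
        rw [Real.norm_eq_abs]
        exact wP_bound ν z n ⟨le_of_lt ht.1, ht.2⟩
      have hmle := setIntegral_mono_on ((hInt n).norm)
        (integrableOn_const (measure_lt_top _ _).ne) measurableSet_Ioc hle
      refine le_trans hmle ?_
      rw [setIntegral_const, smul_eq_mul]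
      have h1 := measure_Ioc_toReal_le_one ν 1
      have h2 : (0:ℝ) ≤ (2*z^2)^n / n.factorial := by positivity
      have h1' : ν.real (Set.Ioc (0:ℝ) 1) ≤ 1 := h1
      nlinarith [mul_le_mul_of_nonneg_right h1' h2]
    exact Summable.of_nonneg_of_le (fun n => integral_nonneg (fun t => norm_nonneg _))
      hone (Real.summable_pow_div_factorial (2*z^2))
  have h1 : ∫ t in Set.Ioc (0:ℝ) 1, (cpF ν z t)^2 ∂ν
      = ∫ t in Set.Ioc (0:ℝ) 1, (∑' n, wP ν z n t) ∂ν := by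
    apply setIntegral_congr_fun measurableSet_Ioc
    intro t ht
    exact cp_sq ν z ⟨le_of_lt ht.1, ht.2⟩
  rw [h1, ← integral_tsum_of_summable_integral_norm hInt hSum]
  exact tsum_congr (fun n => (wP_integral ν z n).symm)

lemma interchange {μ' : Measure ℝ} {x : ℝ} (hx : 0 < x) (hμ : μ' (Set.Ioc 0 x) ≤ 1)
    {F : ℕ → ℝ → ℝ} (hInt : ∀ n, IntegrableOn (F n) (Set.Ioc 0 x) μ')
    {C r : ℝ} (hbound : ∀ n, ∀ t ∈ Set.Ioc (0:ℝ) x, |F n t| ≤ C * r^n / n.factorial) :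
    ∑' n, (∫ t in Set.Ioc (0:ℝ) x, F n t ∂μ') = ∫ t in Set.Ioc (0:ℝ) x, (∑' n, F n t) ∂μ' := by
  apply integral_tsum_of_summable_integral_norm hInt
  have hone : ∀ n : ℕ, (∫ t, ‖F n t‖ ∂(μ'.restrict (Set.Ioc 0 x)))
      ≤ C * r^n / n.factorial := by
    intro n
    have hC : (0:ℝ) ≤ C * r^n / n.factorial :=
      le_trans (abs_nonneg (F n x)) (hbound n x ⟨hx, le_refl x⟩)
    have hle : ∀ t ∈ Set.Ioc (0:ℝ) x, ‖F n t‖ ≤ C * r^n / n.factorial := by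
      intro t ht
      rw [Real.norm_eq_abs]
      exact hbound n t ht
    have hmle := setIntegral_mono_on ((hInt n).norm)
      (integrableOn_const (lt_of_le_of_lt hμ ENNReal.one_lt_top).ne)
      measurableSet_Ioc hle
    refine le_trans hmle ?_
    rw [setIntegral_const, smul_eq_mul]
    have h1 : (μ' (Set.Ioc 0 x)).toReal ≤ 1 := by
      have := ENNReal.toReal_mono ENNReal.one_ne_top hμ
      simpa using this
    have h1' : μ'.real (Set.Ioc 0 x) ≤ 1 := h1
    nlinarith [mul_le_mul_of_nonneg_right h1' hC]
  have hsum2 : Summable (fun n : ℕ => C * r^n / n.factorial) := by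
    have := (Real.summable_pow_div_factorial r).mul_left C
    simpa [mul_div_assoc] using this
  exact Summable.of_nonneg_of_le (fun n => integral_nonneg (fun t => norm_nonneg _))
    hone hsum2

lemma sp_int (z : ℝ) {x : ℝ} (hx : x ∈ Set.Ioc (0:ℝ) 1) :
    spF ν z x = z * ∫ t in Set.Ioc (0:ℝ) x, cpF ν z t ∂ν := by
  have h0 : spF ν z x
      = ∑' n, (∫ t in Set.Ioc (0:ℝ) x, ((-1:ℝ)^n * z^(2*n+1)) * pIter ν (2*n) t ∂ν) := by
    rw [spF]
    apply tsum_congr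
    intro n
    rw [pIter_odd, ← integral_const_mul]
  rw [h0]
  have hμ : ν (Set.Ioc 0 x) ≤ 1 := prob_le_one
  have hInt : ∀ n : ℕ, IntegrableOn (fun t => ((-1:ℝ)^n * z^(2*n+1)) * pIter ν (2*n) t)
      (Set.Ioc 0 x) ν := fun n => (pIter_intOn ν (2*n) ν x).const_mul _
  have hbound : ∀ n : ℕ, ∀ t ∈ Set.Ioc (0:ℝ) x,
      |((-1:ℝ)^n * z^(2*n+1)) * pIter ν (2*n) t| ≤ |z| * (z^2)^n / n.factorial := by
    intro n t ht
    have ht' : t ∈ Set.Icc (0:ℝ) 1 := ⟨le_of_lt ht.1, le_trans ht.2 hx.2⟩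
    rw [abs_mul, abs_mul, abs_pow, abs_neg, abs_one, one_pow, one_mul,
      abs_pow_two_mul_succ, abs_of_nonneg (pIter_nonneg ν _ t)]
    calc |z| * (z^2)^n * pIter ν (2*n) t ≤ |z| * (z^2)^n * (1/n.factorial) :=
          mul_le_mul_of_nonneg_left (pIter_even_le ν n ht') (by positivity)
      _ = |z| * (z^2)^n / n.factorial := by ring
  rw [interchange hx.1 hμ hInt hbound]
  rw [← integral_const_mul]
  apply setIntegral_congr_fun measurableSet_Ioc
  intro t _
  show (∑' (n : ℕ), (-1:ℝ) ^ n * z ^ (2 * n + 1) * pIter ν (2 * n) t) = z * cpF ν z t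
  rw [cpF_eq_tsum, ← tsum_mul_left]
  apply tsum_congr
  intro n
  rw [cTerm]
  have hzz : z^(2*n+1) = z * z^(2*n) := by rw [pow_succ]; ring
  rw [hzz]
  ring

lemma cp_one (z : ℝ) {x : ℝ} (hx : x ∈ Set.Ioc (0:ℝ) 1)
    (hsp : ∀ t ∈ Set.Ioc (0:ℝ) 1, spF ν z t = 0) : cpF ν z x = 1 := by
  have hsumm : Summable (fun n => cTerm ν z n x) :=
    ((summable_abs_cTerm ν z ⟨le_of_lt hx.1, hx.2⟩)).of_abs
  rw [cpF_eq_tsum, Summable.tsum_eq_zero_add hsumm]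
  have h00 : cTerm ν z 0 x = 1 := by
    simp [cTerm, pIter_zero]
  rw [h00]
  have h1 : ∀ n : ℕ, cTerm ν z (n+1) x
      = ∫ t in Set.Ioc (0:ℝ) x, ((-1:ℝ)^(n+1) * z^(2*(n+1))) * pIter ν (2*n+1) t := by
    intro n
    rw [cTerm]
    have h2 : 2*(n+1) = 2*n+2 := by ring
    rw [h2, pIter_even, ← integral_const_mul]
  rw [tsum_congr h1]
  have hμ : (volume : Measure ℝ) (Set.Ioc 0 x) ≤ 1 := by
    rw [Real.volume_Ioc]
    simp only [sub_zero]
    exact ENNReal.ofReal_le_one.2 hx.2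
  have hInt : ∀ n : ℕ, IntegrableOn (fun t => ((-1:ℝ)^(n+1) * z^(2*(n+1))) * pIter ν (2*n+1) t)
      (Set.Ioc 0 x) volume := fun n => (pIter_intOn ν (2*n+1) volume x).const_mul _
  have hbound : ∀ n : ℕ, ∀ t ∈ Set.Ioc (0:ℝ) x,
      |((-1:ℝ)^(n+1) * z^(2*(n+1))) * pIter ν (2*n+1) t| ≤ (z^2) * (z^2)^n / n.factorial := by
    intro n t ht
    have ht' : t ∈ Set.Icc (0:ℝ) 1 := ⟨le_of_lt ht.1, le_trans ht.2 hx.2⟩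
    rw [abs_mul, abs_mul, abs_pow, abs_neg, abs_one, one_pow, one_mul,
      abs_of_nonneg (pIter_nonneg ν _ t)]
    have hzp : |z^(2*(n+1))| = z^2 * (z^2)^n := by
      rw [abs_pow_two_mul z (n+1), pow_succ]
      ring
    rw [hzp]
    calc z^2 * (z^2)^n * pIter ν (2*n+1) t ≤ z^2 * (z^2)^n * (1/n.factorial) :=
          mul_le_mul_of_nonneg_left (pIter_odd_le ν n ht') (by positivity)
      _ = z^2 * (z^2)^n / n.factorial := by ring
  rw [interchange hx.1 hμ hInt hbound]
  have hzero : ∀ t ∈ Set.Ioc (0:ℝ) x,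
      (∑' n : ℕ, ((-1:ℝ)^(n+1) * z^(2*(n+1))) * pIter ν (2*n+1) t) = 0 := by
    intro t ht
    have ht1 : t ∈ Set.Ioc (0:ℝ) 1 := ⟨ht.1, le_trans ht.2 hx.2⟩
    have hterm : ∀ n : ℕ, ((-1:ℝ)^(n+1) * z^(2*(n+1))) * pIter ν (2*n+1) t
        = (-z) * ((-1:ℝ)^n * z^(2*n+1) * pIter ν (2*n+1) t) := by
      intro n
      have h2 : z^(2*(n+1)) = z * z^(2*n+1) := by
        have h4 : 2*(n+1) = (2*n+1)+1 := by ring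
        rw [h4, pow_succ]
        ring
      have h3 : (-1:ℝ)^(n+1) = (-1)^n * (-1) := pow_succ (-1) n
      rw [h2, h3]
      ring
    rw [tsum_congr hterm, tsum_mul_left]
    have : spF ν z t = 0 := hsp t ht1
    rw [spF] at this
    rw [this, mul_zero]
  rw [setIntegral_congr_fun measurableSet_Ioc hzero]
  simp

lemma nu_Ioc (hsupp : ν (Set.Icc (0:ℝ) 1)ᶜ = 0) : ν (Set.Ioc (0:ℝ) 1) = 1 := by
  have hIcc : ν (Set.Icc (0:ℝ) 1) = 1 := (prob_compl_eq_zero_iff measurableSet_Icc).1 hsupp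
  have h0 : ν {(0:ℝ)} = 0 := measure_singleton 0
  have hsub : Set.Icc (0:ℝ) 1 ⊆ Set.Ioc 0 1 ∪ {0} := by
    intro t ht
    rcases eq_or_lt_of_le ht.1 with h|h
    · right; simp [← h]
    · left; exact ⟨h, ht.2⟩
  have h1 : (1:ENNReal) ≤ ν (Set.Ioc 0 1) := by
    calc (1:ENNReal) = ν (Set.Icc 0 1) := hIcc.symm
      _ ≤ ν (Set.Ioc 0 1 ∪ {0}) := measure_mono hsub
      _ ≤ ν (Set.Ioc 0 1) + ν {0} := measure_union_le _ _
      _ = ν (Set.Ioc 0 1) := by rw [h0, add_zero]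
  exact le_antisymm prob_le_one h1

lemma cp_meas (z : ℝ) : AEStronglyMeasurable (fun t => cpF ν z t) (ν.restrict (Set.Ioc 0 1)) := by
  apply aestronglyMeasurable_of_tendsto_ae (u := atTop)
    (f := fun (m : ℕ) (t : ℝ) => ∑ n ∈ Finset.range m, cTerm ν z n t)
  · intro m
    exact (Finset.measurable_sum (Finset.range m)
      (fun n _ => cTerm_measurable ν z n)).aestronglyMeasurable
  · filter_upwards [ae_restrict_mem measurableSet_Ioc] with t ht
    have hsumm : Summable (fun n => cTerm ν z n t) :=
      ((summable_abs_cTerm ν z ⟨le_of_lt ht.1, ht.2⟩)).of_abs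
    exact hsumm.hasSum.tendsto_sum_nat

lemma cp_abs_le (z : ℝ) {t : ℝ} (ht : t ∈ Set.Icc (0:ℝ) 1) :
    |cpF ν z t| ≤ ∑' n : ℕ, (z^2)^n / n.factorial := by
  rw [cpF_eq_tsum]
  have h1 : Summable fun n => ‖cTerm ν z n t‖ := by
    simpa [Real.norm_eq_abs] using summable_abs_cTerm ν z ht
  refine le_trans (norm_tsum_le_tsum_norm h1) ?_
  apply Summable.tsum_le_tsum ?_ h1 (Real.summable_pow_div_factorial (z^2))
  intro n
  rw [Real.norm_eq_abs]
  exact abs_cTerm_le ν z n ht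

lemma SV_pos (hsupp : ν (Set.Icc (0:ℝ) 1)ᶜ = 0) (z : ℝ) (hz : 0 < z)
    (hzero : sinpF ν z = 0) : 0 < ∑' n, vF ν z n := by
  rw [SV_eq]
  have hnn : 0 ≤ ∫ t in Set.Ioc (0:ℝ) 1, (cpF ν z t)^2 ∂ν :=
    integral_nonneg (fun t => sq_nonneg _)
  rcases hnn.lt_or_eq with h|h
  · exact h
  exfalso
  -- the integral of cp² is zero
  have hmeas := cp_meas ν z
  set B : ℝ := ∑' n : ℕ, (z^2)^n / n.factorial with hBdef
  have hint : Integrable (fun t => (cpF ν z t)^2) (ν.restrict (Set.Ioc 0 1)) := by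
    apply Integrable.mono' (g := fun _ => B^2) (integrable_const _)
      (by
        have := hmeas.mul hmeas
        simpa [pow_two, Pi.mul_def] using this)
    filter_upwards [ae_restrict_mem measurableSet_Ioc] with t ht
    rw [Real.norm_eq_abs, abs_of_nonneg (sq_nonneg _), ← sq_abs (cpF ν z t)]
    have h1 : |cpF ν z t| ≤ B := cp_abs_le ν z ⟨le_of_lt ht.1, ht.2⟩
    have h2 : (0:ℝ) ≤ |cpF ν z t| := abs_nonneg _
    nlinarith
  have hae : (fun t => (cpF ν z t)^2) =ᵐ[ν.restrict (Set.Ioc 0 1)] 0 :=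
    (integral_eq_zero_iff_of_nonneg (fun t => sq_nonneg _) hint).1 h.symm
  have hae0 : (fun t => cpF ν z t) =ᵐ[ν.restrict (Set.Ioc 0 1)] 0 := by
    filter_upwards [hae] with t ht
    have : (cpF ν z t)^2 = 0 := ht
    exact pow_eq_zero_iff (by norm_num) |>.1 this
  -- hence sp = 0 on Ioc 0 1
  have hsp : ∀ t ∈ Set.Ioc (0:ℝ) 1, spF ν z t = 0 := by
    intro x hx
    rw [sp_int ν z hx]
    have hae0' : (fun t => cpF ν z t) =ᵐ[ν.restrict (Set.Ioc 0 x)] 0 :=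
      ae_restrict_of_ae_restrict_of_subset (Set.Ioc_subset_Ioc_right hx.2) hae0
    rw [integral_congr_ae hae0']
    simp
  -- hence cp = 1 on Ioc 0 1
  have hcp1 : ∀ x ∈ Set.Ioc (0:ℝ) 1, cpF ν z x = 1 := fun x hx => cp_one ν z hx hsp
  -- contradiction
  have hnull : (ν.restrict (Set.Ioc 0 1)) {t | cpF ν z t ≠ 0} = 0 := by
    have := ae_iff.1 hae0
    simpa using this
  have hsub : Set.Ioc (0:ℝ) 1 ⊆ {t | cpF ν z t ≠ 0} := by
    intro x hx
    simp only [Set.mem_setOf_eq, hcp1 x hx]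
    norm_num
  have h2 : (ν.restrict (Set.Ioc 0 1)) (Set.Ioc (0:ℝ) 1) = 0 :=
    measure_mono_null hsub hnull
  rw [Measure.restrict_apply measurableSet_Ioc, Set.inter_self, nu_Ioc ν hsupp] at h2
  exact one_ne_zero h2

end Stmt7Aux

/-- If `z > 0` is a zero of `sinp`, then `z` is not a local extremum of `sinp`. -/
theorem stmt7 (ν : Measure ℝ) [IsProbabilityMeasure ν] [NullSingletonClass ν]
    (hsupp : ν (Set.Icc (0:ℝ) 1)ᶜ = 0) (z : ℝ) (hz : 0 < z) (hzero : sinpF ν z = 0) :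
    ¬ IsLocalExtr (sinpF ν) z := by
  intro hextr
  have hD : (∑' n, Stmt7Aux.dF ν z n) = 0 :=
    hextr.hasDerivAt_eq_zero (Stmt7Aux.hasDerivAt_sinpF ν z)
  have hSer := Stmt7Aux.seriesId ν z
  rw [Stmt7Aux.E_eq ν z, hzero, hD] at hSer
  have hSV := Stmt7Aux.SV_pos ν hsupp z hz hzero
  simp only [mul_zero, zero_mul, sub_zero, add_zero, zero_add] at hSer
  nlinarith [hSV, hz]
end
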